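/- arXiv:2404.14208 — 9 statements merged into one kernel-verified Lean document; each statement's English description precedes it below -/
import Mathlib

section
/- Let I be an instance of P|r_j, p_j = p|Σ w_j U_j with jobs 1,…,n, and let d_max = max_{j} d_j. Assume r_j ≤ d_max for every job j. Let I' be the instance with the same number n of jobs, the same number m of machines, the same processing time p and the same weights, but with release dates r'_j = d_max − d_j and due dates d'_j = d_max − r_j. Then for every W ∈ ℕ: I admits a feasible schedule whose weighted number of early jobs equals W if and only if I' admits a feasible schedule whose weighted number of early jobs equals W. -/
/-- An instance of `P | r_j, p_j = p | Σ w_j U_j`: `n` jobs, `m` machines,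
common processing time `p`, and for each job a release date, due date and weight. -/
structure SchedInstance where
  n : ℕ
  m : ℕ
  p : ℕ
  hn : 1 ≤ n
  hm : 1 ≤ m
  hp : 1 ≤ p
  r : Fin n → ℕ
  d : Fin n → ℕ
  w : Fin n → ℕ

namespace SchedInstance

/-- A schedule is feasible if every job starts no earlier than its release date and
two distinct jobs on the same machine have starting times differing by at least `p`. -/
def Feasible (I : SchedInstance) (σ : Fin I.n → Fin I.m × ℕ) : Prop :=
  (∀ j, I.r j ≤ (σ j).2) ∧
  (∀ j j', j ≠ j' → (σ j).1 = (σ j').1 →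
    (I.p : ℤ) ≤ |((σ j).2 : ℤ) - ((σ j').2 : ℤ)|)

/-- Job `j` is early in `σ` if it finishes no later than its due date. -/
def Early (I : SchedInstance) (σ : Fin I.n → Fin I.m × ℕ) (j : Fin I.n) : Prop :=
  (σ j).2 + I.p ≤ I.d j

open Classical in
/-- The weighted number of early jobs of a schedule. -/
noncomputable def weightedEarly (I : SchedInstance) (σ : Fin I.n → Fin I.m × ℕ) : ℕ :=
  ∑ j ∈ Finset.univ.filter (fun j => I.Early σ j), I.w j

/-- The reversed instance `I'` with `r'_j = d_max - d_j` and `d'_j = d_max - r_j`. -/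
def flip (I : SchedInstance) : SchedInstance where
  n := I.n
  m := I.m
  p := I.p
  hn := I.hn
  hm := I.hm
  hp := I.hp
  r := fun j => Finset.univ.sup I.d - I.d j
  d := fun j => Finset.univ.sup I.d - I.r j
  w := I.w

end SchedInstance

lemma gap_lemma (a b p : ℕ) (h : a ≠ b) :
    (a+1)*p + p ≤ (b+1)*p ∨ (b+1)*p + p ≤ (a+1)*p := by
  rcases lt_or_gt_of_ne h with h|h
  · left
    calc (a+1)*p + p = (a+2)*p := by ring
      _ ≤ (b+1)*p := Nat.mul_le_mul_right _ (by omega)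
  · right
    calc (b+1)*p + p = (b+2)*p := by ring
      _ ≤ (a+1)*p := Nat.mul_le_mul_right _ (by omega)

lemma pmul (p k : ℕ) : p ≤ (k+1)*p := by
  calc p = 1*p := (one_mul _).symm
    _ ≤ (k+1)*p := Nat.mul_le_mul_right _ (by omega)

lemma key_forward (I : SchedInstance) (σ : Fin I.n → Fin I.m × ℕ)
    (hfeas : I.Feasible σ) :
    ∃ σ' : Fin I.n → Fin I.m × ℕ, (I.flip).Feasible σ' ∧
      (∀ j : Fin I.n, (I.flip).Early σ' j ↔ I.Early σ j) := by
  classical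
  have hd : ∀ j : Fin I.n, I.d j ≤ Finset.univ.sup I.d :=
    fun j => Finset.le_sup (Finset.mem_univ j)
  have hp := I.hp
  refine ⟨fun j => ((σ j).1,
    if (σ j).2 + I.p ≤ I.d j then Finset.univ.sup I.d - ((σ j).2 + I.p)
    else Finset.univ.sup I.d + (j.val+1) * I.p), ?_, ?_⟩
  · constructor
    · intro j
      simp only [SchedInstance.flip]
      split_ifs with h
      · have := hd j; omega
      · have hA := pmul I.p j.val
        generalize (j.val+1) * I.p = A at hA ⊢
        omega
    · intro j j' hne hmach
      simp only [SchedInstance.flip] at *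
      have hs := hfeas.2 j j' hne hmach
      have hdj := hd j; have hdj' := hd j'
      rw [le_abs] at hs ⊢
      split_ifs with h1 h2 h2
      · omega
      · have hA := pmul I.p j'.val
        generalize (j'.val+1) * I.p = A at hA ⊢
        omega
      · have hA := pmul I.p j.val
        generalize (j.val+1) * I.p = A at hA ⊢
        omega
      · have hg := gap_lemma j.val j'.val I.p (fun h => hne (Fin.val_injective h))
        generalize (j.val+1) * I.p = A at hg ⊢
        generalize (j'.val+1) * I.p = B at hg ⊢
        omega
  · intro j
    simp only [SchedInstance.Early, SchedInstance.flip]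
    have hrel := hfeas.1 j
    have hdj := hd j
    split_ifs with h
    · exact iff_of_true (by omega) h
    · refine iff_of_false ?_ h
      have hA := pmul I.p j.val
      generalize (j.val+1) * I.p = A at hA ⊢
      omega

lemma key_backward (I : SchedInstance)
    (hr : ∀ j, I.r j ≤ Finset.univ.sup I.d)
    (σ' : Fin I.n → Fin I.m × ℕ) (hfeas : (I.flip).Feasible σ') :
    ∃ σ : Fin I.n → Fin I.m × ℕ, I.Feasible σ ∧
      (∀ j : Fin I.n, I.Early σ j ↔ (I.flip).Early σ' j) := by
  classical
  have hd : ∀ j : Fin I.n, I.d j ≤ Finset.univ.sup I.d :=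
    fun j => Finset.le_sup (Finset.mem_univ j)
  have hp := I.hp
  refine ⟨fun j => ((σ' j).1,
    if (σ' j).2 + I.p ≤ Finset.univ.sup I.d - I.r j
    then Finset.univ.sup I.d - ((σ' j).2 + I.p)
    else Finset.univ.sup I.d + (j.val+1) * I.p), ?_, ?_⟩
  · constructor
    · intro j
      have hrj := hr j
      dsimp only
      split_ifs with h
      · omega
      · have hA := pmul I.p j.val
        generalize (j.val+1) * I.p = A at hA ⊢
        omega
    · intro j j' hne hmach
      have hs := hfeas.2 j j' hne hmach
      simp only [SchedInstance.flip] at hs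
      have hrj := hr j; have hrj' := hr j'
      dsimp only
      rw [le_abs] at hs ⊢
      split_ifs with h1 h2 h2
      · omega
      · have hA := pmul I.p j'.val
        generalize (j'.val+1) * I.p = A at hA ⊢
        omega
      · have hA := pmul I.p j.val
        generalize (j.val+1) * I.p = A at hA ⊢
        omega
      · have hg := gap_lemma j.val j'.val I.p (fun h => hne (Fin.val_injective h))
        generalize (j.val+1) * I.p = A at hg ⊢
        generalize (j'.val+1) * I.p = B at hg ⊢
        omega
  · intro j
    simp only [SchedInstance.Early, SchedInstance.flip]
    have hrel := hfeas.1 j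
    simp only [SchedInstance.flip] at hrel
    have hdj := hd j
    split_ifs with h
    · exact iff_of_true (by omega) h
    · refine iff_of_false ?_ h
      have hA := pmul I.p j.val
      generalize (j.val+1) * I.p = A at hA ⊢
      omega

/-- assuming every release date is at most `d_max`, the instance `I` admits a
feasible schedule with weighted number of early jobs `W` iff the reversed instance does. -/
theorem statement0 (I : SchedInstance)
    (hr : ∀ j, I.r j ≤ Finset.univ.sup I.d) (W : ℕ) :
    (∃ σ, I.Feasible σ ∧ I.weightedEarly σ = W) ↔
      (∃ σ, (I.flip).Feasible σ ∧ (I.flip).weightedEarly σ = W) := by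
  classical
  constructor
  · rintro ⟨σ, hf, hW⟩
    obtain ⟨σ', hf', hiff⟩ := key_forward I σ hf
    refine ⟨σ', hf', ?_⟩
    rw [← hW]
    simp only [SchedInstance.weightedEarly]
    refine Finset.sum_congr ?_ (fun _ _ => rfl)
    ext j
    simp only [Finset.mem_filter, Finset.mem_univ, true_and]
    exact (hiff j).trans ((@Finset.mem_filter (Fin I.n) (fun j => I.Early σ j)
      (fun _ => Classical.propDecidable _) Finset.univ j).trans (and_iff_right (Finset.mem_univ _))).symm
  · rintro ⟨σ', hf', hW⟩
    obtain ⟨σ, hf, hiff⟩ := key_backward I hr σ' hf'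
    refine ⟨σ, hf, ?_⟩
    rw [← hW]
    simp only [SchedInstance.weightedEarly]
    refine Finset.sum_congr ?_ (fun _ _ => rfl)
    ext j
    simp only [Finset.mem_filter, Finset.mem_univ, true_and]
    exact (hiff j).trans ((@Finset.mem_filter (Fin I.n) (fun j => I.flip.Early σ' j)
      (fun _ => Classical.propDecidable _) Finset.univ j).trans (and_iff_right (Finset.mem_univ _))).symm
end

section
/- For every instance I of P|r_j, p_j = p|Σ w_j U_j there exists a feasible schedule σ such that every job's starting time lies in the set T of relevant starting time points and such that W(σ) ≥ W(σ') for every feasible schedule σ' of I; i.e., there is an optimal feasible schedule using only starting times from T. -/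
namespace SchedInstance

/-- The set of relevant starting time points:
`T = { r_j + p·ℓ : j ∈ {1,…,n}, ℓ ∈ {0,…,n} }`. -/
def relevantTimes (I : SchedInstance) : Set ℕ :=
  {t | ∃ j : Fin I.n, ∃ ℓ ≤ I.n, t = I.r j + I.p * ℓ}

end SchedInstance


/-- Auxiliary: a nonempty finite set of naturals, pairwise spaced by at least `p`,
all at least `x + p` and at most `y`, forces `x + p * card ≤ y`. -/
lemma spaced_aux (p : ℕ) : ∀ (A : Finset ℕ) (x y : ℕ),
    (∀ a ∈ A, ∀ b ∈ A, a < b → a + p ≤ b) →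
    (∀ a ∈ A, x + p ≤ a) → (∀ a ∈ A, a ≤ y) → A.Nonempty →
    x + p * A.card ≤ y := by
  intro A
  induction A using Finset.strongInductionOn with
  | _ A ih =>
    intro x y hpair hx hy hne
    set a0 := A.min' hne with ha0
    have ha0A : a0 ∈ A := A.min'_mem hne
    set A' := A.erase a0 with hA'
    have hss : A' ⊂ A := Finset.erase_ssubset ha0A
    have hcard : A.card = A'.card + 1 := by
      rw [hA', Finset.card_erase_of_mem ha0A]
      have : 0 < A.card := Finset.card_pos.2 hne
      omega
    rcases A'.eq_empty_or_nonempty with hE | hNE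
    · have hc1 : A.card = 1 := by rw [hcard, hE]; simp
      have hc2 : p * A.card = p := by rw [hc1]; ring
      have := hx a0 ha0A
      have := hy a0 ha0A
      omega
    · have hrec := ih A' hss a0 y
        (fun a ha b hb => hpair a (Finset.mem_of_mem_erase ha) b (Finset.mem_of_mem_erase hb))
        (fun a ha => by
          have haA : a ∈ A := Finset.mem_of_mem_erase ha
          have hne' : a ≠ a0 := Finset.ne_of_mem_erase ha
          have : a0 ≤ a := A.min'_le a haA
          exact hpair a0 ha0A a haA (lt_of_le_of_ne this (Ne.symm hne')))
        (fun a ha => hy a (Finset.mem_of_mem_erase ha)) hNE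
      have hxa0 := hx a0 ha0A
      have : p * A.card = p * A'.card + p := by rw [hcard]; ring
      omega

namespace SchedInstance

/-- Left-shifting transformation: any feasible schedule can be converted into one with
all starting times in the relevant set, without decreasing the weighted early count. -/
lemma transform (I : SchedInstance) (σ' : Fin I.n → Fin I.m × ℕ) (h : I.Feasible σ') :
    ∃ σ : Fin I.n → Fin I.m × ℕ, I.Feasible σ ∧ (∀ j, (σ j).2 ∈ I.relevantTimes) ∧
      I.weightedEarly σ' ≤ I.weightedEarly σ := by
  classical
  obtain ⟨hrel, hspace⟩ := h
  set M : Fin I.n → Fin I.m := fun j => (σ' j).1 with hM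
  set t : Fin I.n → ℕ := fun j => (σ' j).2 with ht
  -- times on a common machine are distinct
  have htinj : ∀ j l : Fin I.n, j ≠ l → M j = M l → t j ≠ t l := by
    intro j l hjl hMeq hteq
    have h2 := hspace j l hjl hMeq
    have hz : ((σ' j).2 : ℤ) = ((σ' l).2 : ℤ) := by
      have : (σ' j).2 = (σ' l).2 := hteq
      exact_mod_cast this
    rw [hz, sub_self, abs_zero] at h2
    have := I.hp
    omega
  set K : Fin I.n → Finset (Fin I.n) :=
    fun j => Finset.univ.filter (fun k => M k = M j ∧ t k ≤ t j) with hK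
  have hjK : ∀ j, j ∈ K j := by intro j; simp [hK]
  set cnt : Fin I.n → Fin I.n → ℕ :=
    fun j k => (Finset.univ.filter (fun l => M l = M j ∧ t k < t l ∧ t l ≤ t j)).card with hcnt
  set s : Fin I.n → ℕ := fun j => (K j).sup (fun k => I.r k + I.p * cnt j k) with hs
  have hcntjj : ∀ j, cnt j j = 0 := by
    intro j
    show (Finset.univ.filter (fun l => M l = M j ∧ t j < t l ∧ t l ≤ t j)).card = 0
    simp only [Finset.card_eq_zero, Finset.filter_eq_empty_iff]
    intro l _
    omega
  -- s j ≥ r j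
  have hrs : ∀ j, I.r j ≤ s j := by
    intro j
    have h1 : I.r j + I.p * cnt j j ≤ s j := Finset.le_sup (f := fun k => I.r k + I.p * cnt j k) (hjK j)
    rw [hcntjj j] at h1
    simpa using h1
  -- s j ≤ t j
  have hst : ∀ j, s j ≤ t j := by
    intro j
    apply Finset.sup_le
    intro k hk
    rw [hK] at hk
    simp only [Finset.mem_filter, Finset.mem_univ, true_and] at hk
    obtain ⟨hMk, htk⟩ := hk
    set B := Finset.univ.filter (fun l => M l = M j ∧ t k < t l ∧ t l ≤ t j) with hB
    have hcntB : cnt j k = B.card := rfl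
    have hrk : I.r k ≤ t k := hrel k
    rcases B.eq_empty_or_nonempty with hE | hNE
    · rw [hcntB, hE]
      simp only [Finset.card_empty, Nat.mul_zero, Nat.add_zero]
      omega
    · set A := B.image t with hA
      have hinj : Set.InjOn t B := by
        intro a ha b hb hab
        by_contra hne
        have haB := Finset.mem_filter.1 ha
        have hbB := Finset.mem_filter.1 hb
        exact htinj a b hne (haB.2.1.trans hbB.2.1.symm) hab
      have hAcard : A.card = cnt j k := by
        rw [hA, Finset.card_image_of_injOn hinj, hcntB]
      have hANE : A.Nonempty := hNE.image t
      have key := spaced_aux I.p A (t k) (t j)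
        (by
          intro a ha b hb hab
          obtain ⟨la, hla, rfl⟩ := Finset.mem_image.1 ha
          obtain ⟨lb, hlb, rfl⟩ := Finset.mem_image.1 hb
          have hlane : la ≠ lb := by intro e; rw [e] at hab; omega
          have hMla := (Finset.mem_filter.1 hla).2.1
          have hMlb := (Finset.mem_filter.1 hlb).2.1
          have hsp := hspace la lb hlane (hMla.trans hMlb.symm)
          have hab' : (σ' la).2 < (σ' lb).2 := hab
          rw [abs_sub_comm, abs_of_nonneg (by omega : (0:ℤ) ≤ ((σ' lb).2 :ℤ) - (σ' la).2)] at hsp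
          show (σ' la).2 + I.p ≤ (σ' lb).2
          omega)
        (by
          intro a ha
          obtain ⟨la, hla, rfl⟩ := Finset.mem_image.1 ha
          have hmem := Finset.mem_filter.1 hla
          have htlt : (σ' k).2 < (σ' la).2 := hmem.2.2.1
          have hlane : k ≠ la := by
            intro e; rw [← e] at htlt; omega
          have hsp := hspace k la hlane (hMk.trans hmem.2.1.symm)
          rw [abs_sub_comm, abs_of_nonneg (by omega : (0:ℤ) ≤ ((σ' la).2 :ℤ) - (σ' k).2)] at hsp
          show (σ' k).2 + I.p ≤ (σ' la).2
          omega)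
        (by
          intro a ha
          obtain ⟨la, hla, rfl⟩ := Finset.mem_image.1 ha
          exact (Finset.mem_filter.1 hla).2.2.2)
        hANE
      rw [hAcard] at key
      omega
  -- strict spacing for the new times
  have hstep : ∀ j j' : Fin I.n, j ≠ j' → M j = M j' → t j' < t j → s j' + I.p ≤ s j := by
    intro j j' hjj hMeq htlt
    obtain ⟨k, hkK, hkeq⟩ := Finset.exists_mem_eq_sup (K j')
      ⟨j', hjK j'⟩ (fun k => I.r k + I.p * cnt j' k)
    have hkeq' : s j' = I.r k + I.p * cnt j' k := hkeq
    rw [hK] at hkK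
    simp only [Finset.mem_filter, Finset.mem_univ, true_and] at hkK
    obtain ⟨hMk, htk⟩ := hkK
    have hkKj : k ∈ K j := by
      rw [hK]; simp only [Finset.mem_filter, Finset.mem_univ, true_and]
      exact ⟨hMk.trans hMeq.symm, le_trans htk (le_of_lt htlt)⟩
    have hcntle : cnt j' k + 1 ≤ cnt j k := by
      have hsub : insert j (Finset.univ.filter (fun l => M l = M j' ∧ t k < t l ∧ t l ≤ t j'))
          ⊆ Finset.univ.filter (fun l => M l = M j ∧ t k < t l ∧ t l ≤ t j) := by
        intro l hl
        rcases Finset.mem_insert.1 hl with rfl | hl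
        · exact Finset.mem_filter.2 ⟨Finset.mem_univ _, rfl, lt_of_le_of_lt htk htlt, le_refl _⟩
        · have hl' := Finset.mem_filter.1 hl
          exact Finset.mem_filter.2 ⟨Finset.mem_univ _, hl'.2.1.trans hMeq.symm, hl'.2.2.1,
            le_trans hl'.2.2.2 (le_of_lt htlt)⟩
      have hjnot : j ∉ Finset.univ.filter (fun l => M l = M j' ∧ t k < t l ∧ t l ≤ t j') := by
        intro hc
        have := (Finset.mem_filter.1 hc).2.2.2
        omega
      have h1 : cnt j' k = (Finset.univ.filter
          (fun l => M l = M j' ∧ t k < t l ∧ t l ≤ t j')).card := rfl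
      have h2 : cnt j k = (Finset.univ.filter
          (fun l => M l = M j ∧ t k < t l ∧ t l ≤ t j)).card := rfl
      rw [h1, h2, ← Finset.card_insert_of_notMem hjnot]
      exact Finset.card_le_card hsub
    have hle : I.r k + I.p * cnt j k ≤ s j := Finset.le_sup (f := fun k => I.r k + I.p * cnt j k) hkKj
    have hmul : I.p * (cnt j' k + 1) ≤ I.p * cnt j k := Nat.mul_le_mul_left _ hcntle
    have hpm : I.p * (cnt j' k + 1) = I.p * cnt j' k + I.p := by ring
    omega
  refine ⟨fun j => (M j, s j), ⟨fun j => hrs j, ?_⟩, ?_, ?_⟩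
  · intro j j' hjj hMeq
    simp only at hMeq ⊢
    have htne : t j ≠ t j' := htinj j j' hjj hMeq
    rcases lt_or_gt_of_ne htne with hlt | hlt
    · have hge := hstep j' j (Ne.symm hjj) hMeq.symm hlt
      rw [abs_sub_comm, abs_of_nonneg (by push_cast; omega)]
      push_cast; omega
    · have hge := hstep j j' hjj hMeq hlt
      rw [abs_of_nonneg (by push_cast; omega)]
      push_cast; omega
  · intro j
    obtain ⟨k, hkK, hkeq⟩ := Finset.exists_mem_eq_sup (K j)
      ⟨j, hjK j⟩ (fun k => I.r k + I.p * cnt j k)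
    have hkeq' : s j = I.r k + I.p * cnt j k := hkeq
    refine ⟨k, cnt j k, ?_, ?_⟩
    · calc cnt j k ≤ (Finset.univ : Finset (Fin I.n)).card :=
            Finset.card_le_card (Finset.filter_subset _ _)
        _ = I.n := by simp
    · exact hkeq'
  · unfold weightedEarly
    apply Finset.sum_le_sum_of_subset
    intro j hj
    simp only [Finset.mem_filter, Finset.mem_univ, true_and] at hj ⊢
    unfold Early at hj ⊢
    have h1 := hst j
    have h2 : t j = (σ' j).2 := rfl
    show s j + I.p ≤ I.d j
    omega

end SchedInstance


/-- there is an optimal feasible schedule whose starting times all lie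
in the set of relevant starting time points. -/
theorem statement1 (I : SchedInstance) :
    ∃ σ : Fin I.n → Fin I.m × ℕ, I.Feasible σ ∧
      (∀ j, (σ j).2 ∈ I.relevantTimes) ∧
      (∀ σ' : Fin I.n → Fin I.m × ℕ, I.Feasible σ' →
        I.weightedEarly σ' ≤ I.weightedEarly σ) := by
  classical
  have hmpos : 0 < I.m := I.hm
  set R : ℕ := Finset.univ.sup I.r with hR
  -- a baseline feasible schedule
  have hfeas0 : I.Feasible (fun j => (⟨0, hmpos⟩, R + I.p * (j : ℕ))) := by
    constructor
    · intro j
      have h1 : I.r j ≤ R := Finset.le_sup (Finset.mem_univ j)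
      simp only
      omega
    · intro j j' hjj _
      simp only
      have hne : (j : ℕ) ≠ (j' : ℕ) := fun e => hjj (Fin.ext e)
      have h1 : ((R + I.p * (j:ℕ) : ℕ) : ℤ) - ((R + I.p * (j':ℕ) : ℕ) : ℤ)
          = (I.p : ℤ) * (((j:ℕ):ℤ) - ((j':ℕ):ℤ)) := by push_cast; ring
      rw [h1, abs_mul, abs_of_nonneg (by positivity : (0:ℤ) ≤ (I.p:ℤ))]
      have h2 : 1 ≤ |((j:ℕ):ℤ) - ((j':ℕ):ℤ)| := by
        apply Int.one_le_abs
        have : ((j:ℕ):ℤ) ≠ ((j':ℕ):ℤ) := by exact_mod_cast hne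
        omega
      calc (I.p : ℤ) = (I.p : ℤ) * 1 := by ring
        _ ≤ (I.p : ℤ) * |((j:ℕ):ℤ) - ((j':ℕ):ℤ)| :=
            mul_le_mul_of_nonneg_left h2 (by positivity)
  -- weighted early count is bounded
  have hbound : ∀ σ' : Fin I.n → Fin I.m × ℕ, I.weightedEarly σ' ≤ ∑ j, I.w j := by
    intro σ'
    exact Finset.sum_le_sum_of_subset (Finset.filter_subset _ _)
  set S : Set ℕ := {w | ∃ σ' : Fin I.n → Fin I.m × ℕ, I.Feasible σ' ∧ I.weightedEarly σ' = w}
    with hS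
  have hSne : S.Nonempty := ⟨_, _, hfeas0, rfl⟩
  have hSbdd : BddAbove S := by
    refine ⟨∑ j, I.w j, ?_⟩
    rintro w ⟨σ', _, rfl⟩
    exact hbound σ'
  obtain ⟨σs, hσsfeas, hσsval⟩ := Nat.sSup_mem hSne hSbdd
  obtain ⟨σ, hfeas, hT, hge⟩ := I.transform σs hσsfeas
  refine ⟨σ, hfeas, hT, ?_⟩
  intro σ' hσ'
  have h1 : I.weightedEarly σ' ≤ sSup S := le_csSup hSbdd ⟨σ', hσ', rfl⟩
  omega
end

section
/- If the Hitting Set instance (U, A_0,…,A_{m−1}, k) admits a hitting set of size k, then the constructed scheduling instance I' admits a feasible schedule in which at least (k·(n−1) + 1)·m·k jobs are early. -/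
/-- Jobs of the scheduling instance `I'` constructed from a Hitting Set instance with
universe `U = Fin n`, sets `A : Fin m → Finset (Fin n)` and parameter `k`:
for each `ℓ ∈ {0,…,k(n-1)}` and `j ∈ {0,…,m-1}` there is one job `J^ℓ_{j,i}` for each
`u_i ∈ A j` (left summand) and `k - 1` dummy jobs `D^ℓ_{j,q}` (right summand). -/
def HSJob (n m k : ℕ) (A : Fin m → Finset (Fin n)) : Type :=
  {x : Fin (k * (n - 1) + 1) × Fin m × Fin n // x.2.2 ∈ A x.2.1} ⊕
    (Fin (k * (n - 1) + 1) × Fin m × Fin (k - 1))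

/-- Release dates of the constructed jobs (here `p = 2n`). -/
def hsRelease (n m k : ℕ) (A : Fin m → Finset (Fin n)) : HSJob n m k A → ℕ
  | Sum.inl ⟨(ℓ, j, i), _⟩ => (ℓ.1 * m + j.1) * (2 * n) + i.1
  | Sum.inr (ℓ, j, _) => (ℓ.1 * m + j.1) * (2 * n)

/-- Due dates of the constructed jobs (here `p = 2n`). -/
def hsDue (n m k : ℕ) (A : Fin m → Finset (Fin n)) : HSJob n m k A → ℕ
  | Sum.inl ⟨(ℓ, j, i), _⟩ => (ℓ.1 * m + j.1 + 1) * (2 * n) + i.1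
  | Sum.inr (ℓ, j, _) => (ℓ.1 * m + j.1 + 1) * (2 * n) + n

/-- A schedule `σ` on `M` machines with common processing time `p` and release dates `rel`
is feasible if every job starts no earlier than its release date and any two distinct jobs
on the same machine have starting times differing by at least `p`. -/
def FeasibleSched {J : Type} (M p : ℕ) (rel : J → ℕ) (σ : J → Fin M × ℕ) : Prop :=
  (∀ a, rel a ≤ (σ a).2) ∧
  (∀ a b, a ≠ b → (σ a).1 = (σ b).1 → (p : ℤ) ≤ |((σ a).2 : ℤ) - ((σ b).2 : ℤ)|)

open Classical in
/-- The number of early jobs of a schedule. -/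
noncomputable def earlyCount {J : Type} [Fintype J] {M : ℕ} (p : ℕ) (due : J → ℕ)
    (σ : J → Fin M × ℕ) : ℕ :=
  (Finset.univ.filter (fun a => (σ a).2 + p ≤ due a)).card

instance (n m k : ℕ) (A : Fin m → Finset (Fin n)) : Fintype (HSJob n m k A) := by
  unfold HSJob; infer_instance


/-! ### Auxiliary machinery for `statement3` -/

/-- Machine assigned to dummy job `d` when the hit real job uses machine `s`. -/
def hsMd (k : ℕ) (hk : 0 < k) (s : Fin k) (d : Fin (k - 1)) : Fin k :=
  if h : d.1 < s.1 then ⟨d.1, h.trans s.2⟩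
  else ⟨d.1 + 1, by have := d.2; omega⟩

lemma hsMd_ne (k : ℕ) (hk : 0 < k) (s : Fin k) (d : Fin (k - 1)) :
    hsMd k hk s d ≠ s := by
  unfold hsMd; split_ifs with h
  · exact Fin.ne_of_val_ne (Nat.ne_of_lt h)
  · exact Fin.ne_of_val_ne (show d.1 + 1 ≠ s.1 by omega)

lemma hsMd_inj (k : ℕ) (hk : 0 < k) (s : Fin k) {d₁ d₂ : Fin (k - 1)}
    (h : hsMd k hk s d₁ = hsMd k hk s d₂) : d₁ = d₂ := by
  unfold hsMd at h
  split_ifs at h with h1 h2 h2 <;>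
    (apply Fin.ext; have := congrArg Fin.val h; simp at this; omega)

/-- The schedule constructed from a hitting set (encoded via `w`, `s`, `f`). -/
def sched (n m k : ℕ) (A : Fin m → Finset (Fin n)) (hk : 0 < k)
    (w : Fin m → Fin n) (s : Fin m → Fin k) (f : Fin k → Fin n) :
    HSJob n m k A → Fin k × ℕ
  | Sum.inl ⟨(ℓ, j, i), _⟩ =>
      if i = w j then (s j, (ℓ.1 * m + j.1) * (2 * n) + i.1)
      else (⟨0, hk⟩,
        ((k * (n - 1) + 1) * m + 1) * (2 * n) + ((ℓ.1 * m + j.1) * n + i.1) * (2 * n))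
  | Sum.inr (ℓ, j, d) =>
      (hsMd k hk (s j) d, (ℓ.1 * m + j.1) * (2 * n) + (f (hsMd k hk (s j) d)).1)

lemma blk_inj {m a b c d : ℕ} (hb : b < m) (hd : d < m)
    (h : a * m + b = c * m + d) : a = c ∧ b = d := by
  have key : ∀ x y u v : ℕ, y < m → v < m → x * m + y = u * m + v → x ≤ u := by
    intro x y u v hy hv hxy
    by_contra hlt
    push_neg at hlt
    have h1 : u * m + m ≤ x * m := by
      calc u * m + m = (u + 1) * m := by ring
        _ ≤ x * m := Nat.mul_le_mul_right m hlt
    linarith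
  have h1 : a ≤ c := key a b c d hb hd h
  have h2 : c ≤ a := key c d a b hd hb h.symm
  have hac : a = c := le_antisymm h1 h2
  subst hac
  exact ⟨rfl, by omega⟩

lemma blkLe {L m ℓ j : ℕ} (hℓ : ℓ ≤ L) (hj : j < m) :
    ℓ * m + j + 1 ≤ (L + 1) * m := by
  have h1 : ℓ * m ≤ L * m := Nat.mul_le_mul_right m hℓ
  have h2 : (L + 1) * m = L * m + m := by ring
  omega

lemma absGap {x y p : ℤ} (h : x + p ≤ y ∨ y + p ≤ x) : p ≤ |x - y| := by
  rcases h with h | h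
  · rw [abs_sub_comm]
    exact le_trans (by linarith) (le_abs_self _)
  · exact le_trans (by linarith) (le_abs_self _)

lemma gapNat' {B₁ B₂ p c x y : ℕ} (h : B₁ ≠ B₂) (hx : x = B₁ * p + c)
    (hy : y = B₂ * p + c) : (p : ℤ) ≤ |(x : ℤ) - (y : ℤ)| := by
  subst hx; subst hy
  apply absGap
  rcases h.lt_or_gt with h1 | h1
  · left
    have h2 : (B₁ + 1) * p ≤ B₂ * p := Nat.mul_le_mul_right p h1
    have h3 : B₁ * p + p + c ≤ B₂ * p + c := by
      have : (B₁ + 1) * p = B₁ * p + p := by ring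
      omega
    push_cast
    push_cast at h3
    linarith
  · right
    have h2 : (B₂ + 1) * p ≤ B₁ * p := Nat.mul_le_mul_right p h1
    have h3 : B₂ * p + p + c ≤ B₁ * p + c := by
      have : (B₂ + 1) * p = B₂ * p + p := by ring
      omega
    push_cast
    push_cast at h3
    linarith

lemma gapNat2 {e₁ e₂ p T x y : ℕ} (h : e₁ ≠ e₂) (hx : x = T + e₁ * p)
    (hy : y = T + e₂ * p) : (p : ℤ) ≤ |(x : ℤ) - (y : ℤ)| := by
  subst hx; subst hy
  apply absGap
  rcases h.lt_or_gt with h1 | h1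
  · left
    have h2 : (e₁ + 1) * p ≤ e₂ * p := Nat.mul_le_mul_right p h1
    have h3 : (e₁ + 1) * p = e₁ * p + p := by ring
    push_cast
    have h4 : T + e₁ * p + p ≤ T + e₂ * p := by omega
    push_cast at h4
    linarith
  · right
    have h2 : (e₂ + 1) * p ≤ e₁ * p := Nat.mul_le_mul_right p h1
    have h3 : (e₂ + 1) * p = e₂ * p + p := by ring
    push_cast
    have h4 : T + e₂ * p + p ≤ T + e₁ * p := by omega
    push_cast at h4
    linarith

lemma lateFar {n M B c e : ℕ} (hn : 1 ≤ n) (hB : B + 1 ≤ M) (hc : c < n) :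
    B * (2 * n) + c + 2 * n ≤ (M + 1) * (2 * n) + e * (2 * n) := by
  have h1 : (B + 1) * (2 * n) ≤ M * (2 * n) := Nat.mul_le_mul_right _ hB
  have h2 : (B + 1) * (2 * n) = B * (2 * n) + 2 * n := by ring
  have h3 : (M + 1) * (2 * n) = M * (2 * n) + 2 * n := by ring
  omega

lemma lateGap' {n M B c e x y : ℕ} (hn : 1 ≤ n) (hB : B + 1 ≤ M) (hc : c < n)
    (hx : x = B * (2 * n) + c) (hy : y = (M + 1) * (2 * n) + e * (2 * n)) :
    ((2 * n : ℕ) : ℤ) ≤ |(x : ℤ) - (y : ℤ)| := by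
  subst hx; subst hy
  apply absGap
  left
  have h := lateFar (e := e) hn hB hc
  push_cast
  push_cast at h
  linarith

theorem mainAux (n m k : ℕ) (hn : 1 ≤ n) (hm : 1 ≤ m) (hk : 0 < k)
    (A : Fin m → Finset (Fin n)) (w : Fin m → Fin n) (s : Fin m → Fin k)
    (f : Fin k → Fin n) (hfs : ∀ j, f (s j) = w j) (hwA : ∀ j, w j ∈ A j) :
    FeasibleSched k (2 * n) (hsRelease n m k A) (sched n m k A hk w s f) ∧
    (k * (n - 1) + 1) * m * k ≤
      earlyCount (2 * n) (hsDue n m k A) (sched n m k A hk w s f) := by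
  constructor
  · constructor
    · -- release dates
      rintro (⟨⟨ℓ, j, i⟩, hi⟩ | ⟨ℓ, j, d⟩)
      · by_cases hwi : i = w j
        · simp [sched, hsRelease, hwi]
        · simp only [sched, hsRelease, if_neg hwi]
          have hB : ℓ.1 * m + j.1 + 1 ≤ (k * (n - 1) + 1) * m :=
            blkLe (Nat.lt_succ_iff.mp ℓ.2) j.2
          have := lateFar (e := (ℓ.1 * m + j.1) * n + i.1) hn hB i.2
          omega
      · simp [sched, hsRelease]
    · -- spacing
      rintro (⟨⟨ℓ₁, j₁, i₁⟩, hi₁⟩ | ⟨ℓ₁, j₁, d₁⟩) (⟨⟨ℓ₂, j₂, i₂⟩, hi₂⟩ | ⟨ℓ₂, j₂, d₂⟩) hab hmach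
      · -- real vs real
        by_cases hw1 : i₁ = w j₁ <;> by_cases hw2 : i₂ = w j₂
        · -- hit vs hit
          simp only [sched, if_pos hw1, if_pos hw2] at hmach ⊢
          have hcc : i₁.1 = i₂.1 := by
            rw [hw1, hw2, ← hfs j₁, ← hfs j₂, hmach]
          have hBne : ℓ₁.1 * m + j₁.1 ≠ ℓ₂.1 * m + j₂.1 := by
            intro hB
            obtain ⟨hℓ, hj⟩ := blk_inj j₁.2 j₂.2 hB
            exact hab (by
              congr 1
              exact Subtype.ext (Prod.ext (Fin.ext hℓ)
                (Prod.ext (Fin.ext hj) (Fin.ext hcc))))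
          exact gapNat' (c := i₁.1) hBne rfl (by rw [hcc])
        · -- hit vs nonhit
          simp only [sched, if_pos hw1, if_neg hw2] at hmach ⊢
          have hB : ℓ₁.1 * m + j₁.1 + 1 ≤ (k * (n - 1) + 1) * m :=
            blkLe (Nat.lt_succ_iff.mp ℓ₁.2) j₁.2
          exact lateGap' hn hB i₁.2 rfl rfl
        · -- nonhit vs hit
          simp only [sched, if_neg hw1, if_pos hw2] at hmach ⊢
          rw [abs_sub_comm]
          have hB : ℓ₂.1 * m + j₂.1 + 1 ≤ (k * (n - 1) + 1) * m :=
            blkLe (Nat.lt_succ_iff.mp ℓ₂.2) j₂.2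
          exact lateGap' hn hB i₂.2 rfl rfl
        · -- nonhit vs nonhit
          simp only [sched, if_neg hw1, if_neg hw2] at hmach ⊢
          have hene : (ℓ₁.1 * m + j₁.1) * n + i₁.1 ≠ (ℓ₂.1 * m + j₂.1) * n + i₂.1 := by
            intro he
            obtain ⟨hB, hi⟩ := blk_inj i₁.2 i₂.2 he
            obtain ⟨hℓ, hj⟩ := blk_inj j₁.2 j₂.2 hB
            exact hab (by
              congr 1
              exact Subtype.ext (Prod.ext (Fin.ext hℓ)
                (Prod.ext (Fin.ext hj) (Fin.ext hi))))
          exact gapNat2 hene rfl rfl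
      · -- real vs dummy
        by_cases hw1 : i₁ = w j₁
        · simp only [sched, if_pos hw1] at hmach ⊢
          have hcc : i₁.1 = (f (hsMd k hk (s j₂) d₂)).1 := by
            rw [hw1, ← hfs j₁, hmach]
          have hBne : ℓ₁.1 * m + j₁.1 ≠ ℓ₂.1 * m + j₂.1 := by
            intro hB
            obtain ⟨hℓ, hj⟩ := blk_inj j₁.2 j₂.2 hB
            have hjj : j₁ = j₂ := Fin.ext hj
            rw [hjj] at hmach
            exact hsMd_ne k hk (s j₂) d₂ hmach.symm
          exact gapNat' (c := (f (hsMd k hk (s j₂) d₂)).1) hBne (by rw [hcc]) rfl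
        · simp only [sched, if_neg hw1] at hmach ⊢
          rw [abs_sub_comm]
          have hB : ℓ₂.1 * m + j₂.1 + 1 ≤ (k * (n - 1) + 1) * m :=
            blkLe (Nat.lt_succ_iff.mp ℓ₂.2) j₂.2
          exact lateGap' hn hB (f (hsMd k hk (s j₂) d₂)).2 rfl rfl
      · -- dummy vs real
        by_cases hw2 : i₂ = w j₂
        · simp only [sched, if_pos hw2] at hmach ⊢
          have hcc : i₂.1 = (f (hsMd k hk (s j₁) d₁)).1 := by
            rw [hw2, ← hfs j₂, ← hmach]
          have hBne : ℓ₁.1 * m + j₁.1 ≠ ℓ₂.1 * m + j₂.1 := by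
            intro hB
            obtain ⟨hℓ, hj⟩ := blk_inj j₁.2 j₂.2 hB
            have hjj : j₁ = j₂ := Fin.ext hj
            rw [hjj] at hmach
            exact hsMd_ne k hk (s j₂) d₁ hmach
          exact gapNat' (c := (f (hsMd k hk (s j₁) d₁)).1) hBne rfl (by rw [hcc])
        · simp only [sched, if_neg hw2] at hmach ⊢
          have hB : ℓ₁.1 * m + j₁.1 + 1 ≤ (k * (n - 1) + 1) * m :=
            blkLe (Nat.lt_succ_iff.mp ℓ₁.2) j₁.2
          exact lateGap' hn hB (f (hsMd k hk (s j₁) d₁)).2 rfl rfl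
      · -- dummy vs dummy
        simp only [sched] at hmach ⊢
        have hcc : (f (hsMd k hk (s j₁) d₁)).1 = (f (hsMd k hk (s j₂) d₂)).1 := by
          rw [hmach]
        have hBne : ℓ₁.1 * m + j₁.1 ≠ ℓ₂.1 * m + j₂.1 := by
          intro hB
          obtain ⟨hℓ, hj⟩ := blk_inj j₁.2 j₂.2 hB
          have hjj : j₁ = j₂ := Fin.ext hj
          rw [hjj] at hmach
          have hd : d₁ = d₂ := hsMd_inj k hk (s j₂) hmach
          exact hab (by rw [hjj, hd, Fin.ext hℓ])
        exact gapNat' (c := (f (hsMd k hk (s j₂) d₂)).1) hBne (by rw [hcc]) rfl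
  · -- early count
    classical
    set g : Fin (k * (n - 1) + 1) × Fin m × Fin k → HSJob n m k A := fun x =>
      if h : x.2.2.1 < k - 1 then Sum.inr (x.1, x.2.1, ⟨x.2.2.1, h⟩)
      else Sum.inl ⟨(x.1, x.2.1, w x.2.1), hwA x.2.1⟩ with hg
    have hmaps : ∀ x ∈ (Finset.univ : Finset (Fin (k * (n - 1) + 1) × Fin m × Fin k)),
        g x ∈ Finset.univ.filter
          (fun a => (sched n m k A hk w s f a).2 + 2 * n ≤ hsDue n m k A a) := by
      rintro ⟨ℓ, j, q⟩ _
      simp only [Finset.mem_filter, Finset.mem_univ, true_and, hg]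
      split_ifs with h
      · simp only [h, ↓reduceDIte]
        simp only [sched, hsDue]
        have hfn : (f (hsMd k hk (s j) ⟨q.1, h⟩)).1 < n :=
          (f (hsMd k hk (s j) ⟨q.1, h⟩)).2
        have : (ℓ.1 * m + j.1 + 1) * (2 * n) = (ℓ.1 * m + j.1) * (2 * n) + 2 * n := by
          ring
        omega
      · have hv : (sched n m k A hk w s f (Sum.inl ⟨(ℓ, j, w j), hwA j⟩)).2
            = (ℓ.1 * m + j.1) * (2 * n) + (w j).1 := by
          simp [sched]
        simp only [h, ↓reduceDIte]
        rw [hv]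
        simp only [hsDue]
        have : (ℓ.1 * m + j.1 + 1) * (2 * n) = (ℓ.1 * m + j.1) * (2 * n) + 2 * n := by
          ring
        omega
    have hinj : Set.InjOn g (Finset.univ : Finset (Fin (k * (n - 1) + 1) × Fin m × Fin k)) := by
      rintro ⟨ℓ₁, j₁, q₁⟩ _ ⟨ℓ₂, j₂, q₂⟩ _ hxy
      simp only [hg] at hxy
      by_cases h1 : q₁.1 < k - 1 <;> by_cases h2 : q₂.1 < k - 1 <;>
        simp only [h1, h2, ↓reduceDIte] at hxy
      all_goals
        (first
          | exact absurd hxy (by simp)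
          | (have h' := Sum.inr.inj hxy
             simp only [Prod.mk.injEq] at h'
             obtain ⟨ha, hb, hc⟩ := h'
             have hq : q₁ = q₂ := Fin.ext (by
               have := congrArg Fin.val hc; simpa using this)
             simp [ha, hb, hq])
          | (have h' := Subtype.ext_iff.mp (Sum.inl.inj hxy)
             simp only [Prod.mk.injEq] at h'
             obtain ⟨ha, hb, -⟩ := h'
             have hq : q₁ = q₂ := Fin.ext (by
               have hq1 := q₁.2; have hq2 := q₂.2; omega)
             simp [ha, hb, hq]))
    have hcard : ((Finset.univ : Finset (Fin (k * (n - 1) + 1) × Fin m × Fin k))).card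
        = (k * (n - 1) + 1) * m * k := by
      simp [mul_assoc]
    calc (k * (n - 1) + 1) * m * k = _ := hcard.symm
      _ ≤ _ := Finset.card_le_card_of_injOn g hmaps hinj


/-- if the Hitting Set instance has a hitting set of size `k`, then the
constructed scheduling instance has a feasible schedule with at least
`(k(n-1)+1)·m·k` early jobs. -/
theorem statement3 (n m k : ℕ) (hn : 1 ≤ n) (hm : 1 ≤ m) (hk : 1 ≤ k)
    (A : Fin m → Finset (Fin n))
    (hHS : ∃ X : Finset (Fin n), X.card = k ∧ ∀ j : Fin m, (X ∩ A j).Nonempty) :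
    ∃ σ : HSJob n m k A → Fin k × ℕ,
      FeasibleSched k (2 * n) (hsRelease n m k A) σ ∧
      (k * (n - 1) + 1) * m * k ≤ earlyCount (2 * n) (hsDue n m k A) σ := by
  obtain ⟨X, hXcard, hhit⟩ := hHS
  choose w hw using hhit
  have hwX : ∀ j, w j ∈ X := fun j => (Finset.mem_inter.mp (hw j)).1
  have hwA : ∀ j, w j ∈ A j := fun j => (Finset.mem_inter.mp (hw j)).2
  have hk0 : 0 < k := hk
  let e := X.equivFin
  let f : Fin k → Fin n := fun q => ((e.symm (Fin.cast hXcard.symm q)) : X)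
  let s : Fin m → Fin k := fun j => Fin.cast hXcard (e ⟨w j, hwX j⟩)
  have hfs : ∀ j, f (s j) = w j := by
    intro j
    show ((e.symm (Fin.cast hXcard.symm (Fin.cast hXcard (e ⟨w j, hwX j⟩)))) : X).1 = w j
    have h1 : Fin.cast hXcard.symm (Fin.cast hXcard (e ⟨w j, hwX j⟩)) = e ⟨w j, hwX j⟩ :=
      rfl
    rw [h1, Equiv.symm_apply_apply]
  exact ⟨sched n m k A hk0 w s f, (mainAux n m k hn hm hk0 A w s f hfs hwA).1,
    (mainAux n m k hn hm hk0 A w s f hfs hwA).2⟩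
end

section
/- The Hitting Set instance (U, A_0,…,A_{m−1}, k) admits a hitting set of size at most k if and only if the constructed scheduling instance I' admits a feasible schedule in which at least (k·(n−1) + 1)·m·k jobs are early. -/
namespace HS5

variable {n m k : ℕ} {A : Fin m → Finset (Fin n)}

def blk : HSJob n m k A → ℕ
  | Sum.inl ⟨(ℓ, j, _), _⟩ => ℓ.1 * m + j.1
  | Sum.inr (ℓ, j, _) => ℓ.1 * m + j.1

@[simp] lemma blk_inl (ℓ : Fin (k*(n-1)+1)) (j : Fin m) (i : Fin n) (h) :
    blk (A := A) (Sum.inl ⟨(ℓ, j, i), h⟩) = ℓ.1 * m + j.1 := rfl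

@[simp] lemma blk_inr (ℓ : Fin (k*(n-1)+1)) (j : Fin m) (q : Fin (k-1)) :
    blk (A := A) (Sum.inr (ℓ, j, q)) = ℓ.1 * m + j.1 := rfl

lemma blk_lt (a : HSJob n m k A) : blk a < (k * (n - 1) + 1) * m := by
  obtain (⟨⟨ℓ, j, i⟩, h⟩ | ⟨ℓ, j, q⟩) := a <;>
  · show ℓ.1 * m + j.1 < _
    have h1 := ℓ.2; have h2 := j.2
    calc ℓ.1 * m + j.1 < ℓ.1 * m + m := by omega
      _ = (ℓ.1 + 1) * m := by ring
      _ ≤ (k*(n-1)+1) * m := Nat.mul_le_mul_right _ (by omega)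

lemma blkdec {l l' j j' : ℕ} (hj : j < m) (hj' : j' < m)
    (h : l * m + j = l' * m + j') : l = l' ∧ j = j' := by
  have h1 : ¬ l < l' := fun hl => by
    have := Nat.mul_le_mul_right m (show l + 1 ≤ l' by omega)
    rw [Nat.add_mul, Nat.one_mul] at this; omega
  have h2 : ¬ l' < l := fun hl => by
    have := Nat.mul_le_mul_right m (show l' + 1 ≤ l by omega)
    rw [Nat.add_mul, Nat.one_mul] at this; omega
  have : l = l' := by omega
  subst this; omega


lemma le_earlyCount {J : Type} [Fintype J] {M : ℕ} (p : ℕ) (due : J → ℕ) (σ : J → Fin M × ℕ)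
    {β : Type} [Fintype β] (f : β → J) (hinj : Function.Injective f)
    (hearly : ∀ x, (σ (f x)).2 + p ≤ due (f x)) :
    Fintype.card β ≤ earlyCount p due σ := by
  have hmem : ∀ x, f x ∈ Finset.univ.filter (fun a => (σ a).2 + p ≤ due a) := fun x =>
    Finset.mem_filter.mpr ⟨Finset.mem_univ _, hearly x⟩
  have h2 := Finset.card_le_card_of_injOn (s := (Finset.univ : Finset β)) f
    (fun x _ => hmem x) (fun x _ y _ h => hinj h)
  rw [earlyCount]
  simpa using h2

lemma arith1 {x y : ℕ} (p : ℕ) (h : x < y) : x * p + p ≤ y * p := by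
  have h2 : (x + 1) * p ≤ y * p := Nat.mul_le_mul_right _ h
  rw [Nat.add_mul, Nat.one_mul] at h2
  omega

lemma forward (hn : 1 ≤ n) (hm : 1 ≤ m) (hk : 1 ≤ k)
    (X : Finset (Fin n)) (hXk : X.card ≤ k) (hXA : ∀ j : Fin m, (X ∩ A j).Nonempty) :
    ∃ σ : HSJob n m k A → Fin k × ℕ,
        FeasibleSched k (2 * n) (hsRelease n m k A) σ ∧
        (k * (n - 1) + 1) * m * k ≤ earlyCount (2 * n) (hsDue n m k A) σ := by
  classical
  -- choose hitting element per set
  have hc : ∀ j : Fin m, (hXA j).choose ∈ X ∧ (hXA j).choose ∈ A j := fun j =>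
    Finset.mem_inter.mp (hXA j).choose_spec
  set c : Fin m → Fin n := fun j => (hXA j).choose with hcdef
  have hcA : ∀ j, c j ∈ A j := fun j => (hc j).2
  -- factor c through the machines
  obtain ⟨μ, e, he⟩ : ∃ (μ : Fin m → Fin k) (e : Fin k → Fin n), ∀ j, e (μ j) = c j := by
    set Y := Finset.image c Finset.univ with hY
    have hYX : Y ⊆ X := by
      intro x hx
      rw [hY, Finset.mem_image] at hx
      obtain ⟨j, _, rfl⟩ := hx
      exact (hc j).1
    have hYk : Y.card ≤ k := le_trans (Finset.card_le_card hYX) hXk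
    have hY0 : 0 < Y.card :=
      Finset.card_pos.mpr ⟨c ⟨0, hm⟩, Finset.mem_image_of_mem c (Finset.mem_univ _)⟩
    have hcY : ∀ j, c j ∈ Y := fun j => Finset.mem_image_of_mem c (Finset.mem_univ _)
    set φ := Y.orderIsoOfFin rfl with hφ
    refine ⟨fun j => ⟨(φ.symm ⟨c j, hcY j⟩).1, lt_of_lt_of_le (Fin.is_lt _) hYk⟩,
      fun q => if h : q.1 < Y.card then ((φ ⟨q.1, h⟩ : Y) : Fin n) else ((φ ⟨0, hY0⟩ : Y) : Fin n),
      fun j => ?_⟩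
    dsimp only
    rw [dif_pos (Fin.is_lt (φ.symm ⟨c j, hcY j⟩))]
    rw [Fin.eta, OrderIso.apply_symm_apply]
  -- dummy machines
  obtain ⟨ν, hνval⟩ : ∃ ν : Fin m → Fin (k-1) → Fin k,
      ∀ j q, (ν j q).1 = if q.1 < (μ j).1 then q.1 else q.1 + 1 := by
    refine ⟨fun j q => if h : q.1 < (μ j).1 then ⟨q.1, lt_trans h (μ j).2⟩
      else ⟨q.1 + 1, by have := q.2; omega⟩, fun j q => ?_⟩
    dsimp only
    split <;> rfl
  have hνne : ∀ j q, ν j q ≠ μ j := by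
    intro j q h
    have := congrArg Fin.val h
    rw [hνval] at this
    split at this <;> omega
  have hνinj : ∀ j q q', ν j q = ν j q' → q = q' := by
    intro j q q' h
    have := congrArg Fin.val h
    rw [hνval, hνval] at this
    apply Fin.ext
    split at this <;> split at this <;> omega
  set ord := Fintype.equivFin (HSJob n m k A) with hord_def
  have hB1 : 1 ≤ (k * (n - 1) + 1) * m := by
    have : 1 * 1 ≤ (k * (n - 1) + 1) * m := Nat.mul_le_mul (by omega) hm
    omega
  set σ : HSJob n m k A → Fin k × ℕ := Sum.elim
    (fun x => if x.1.2.2 = c x.1.2.1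
      then (μ x.1.2.1, (x.1.1.1 * m + x.1.2.1.1) * (2*n) + x.1.2.2.1)
      else (⟨0, hk⟩, ((k * (n - 1) + 1) * m + 1) * (2*n) + (ord (Sum.inl x)).1 * (2*n)))
    (fun y => (ν y.2.1 y.2.2, (y.1.1 * m + y.2.1.1) * (2*n) + (e (ν y.2.1 y.2.2)).1)) with hσ
  set isMain : HSJob n m k A → Prop :=
    Sum.elim (fun x => x.1.2.2 = c x.1.2.1) (fun _ => True) with hisMain
  have hmainT : ∀ a, isMain a → (σ a).2 = blk a * (2*n) + (e (σ a).1).1 := by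
    rintro (⟨⟨ℓ, j, i⟩, hij⟩ | ⟨ℓ, j, q⟩) ha
    · have hi : i = c j := ha
      rw [hσ]
      simp only [Sum.elim_inl, if_pos hi, blk_inl]
      rw [he, hi]
    · rfl
  have hmainM : ∀ a, isMain a → (σ a).2 + 2*n ≤ ((k * (n - 1) + 1) * m + 1) * (2*n) := by
    intro a ha
    rw [hmainT a ha]
    have h2 : (e (σ a).1).1 < n := Fin.is_lt _
    have h3 := arith1 (2*n) (blk_lt a)
    have h4 : ((k*(n-1)+1)*m + 1)*(2*n) = ((k*(n-1)+1)*m)*(2*n) + 2*n := by ring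
    omega
  have hord2T : ∀ a, ¬ isMain a →
      (σ a).2 = ((k * (n - 1) + 1) * m + 1)*(2*n) + (ord a).1 * (2*n) := by
    rintro (⟨⟨ℓ, j, i⟩, hij⟩ | ⟨ℓ, j, q⟩) ha
    · have hi : ¬ i = c j := ha
      rw [hσ]
      simp only [Sum.elim_inl, if_neg hi]
    · exact absurd trivial ha
  have hord2M : ∀ a, ¬ isMain a → (σ a).1 = ⟨0, hk⟩ := by
    rintro (⟨⟨ℓ, j, i⟩, hij⟩ | ⟨ℓ, j, q⟩) ha
    · have hi : ¬ i = c j := ha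
      rw [hσ]
      simp only [Sum.elim_inl, if_neg hi]
    · exact absurd trivial ha
  have hBp : ((k * (n - 1) + 1) * m) * (2*n) + 2*n ≤ ((k * (n - 1) + 1) * m + 1)*(2*n) := by
    have : ((k * (n - 1) + 1) * m + 1)*(2*n) = ((k * (n - 1) + 1) * m)*(2*n) + 2*n := by ring
    omega
  have huniq : ∀ a b, isMain a → isMain b → blk a = blk b → (σ a).1 = (σ b).1 → a = b := by
    rintro (⟨⟨ℓ, j, i⟩, hij⟩ | ⟨ℓ, j, q⟩) (⟨⟨ℓ', j', i'⟩, hij'⟩ | ⟨ℓ', j', q'⟩) ha hb hblk hmach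
    · have hi : i = c j := ha
      have hi' : i' = c j' := hb
      simp only [blk_inl] at hblk
      obtain ⟨h1, h2⟩ := blkdec j.2 j'.2 hblk
      have hℓ : ℓ = ℓ' := Fin.ext h1
      have hj : j = j' := Fin.ext h2
      subst hℓ; subst hj
      have : i = i' := by rw [hi, hi']
      subst this
      rfl
    · exfalso
      have hi : i = c j := ha
      simp only [blk_inl, blk_inr] at hblk
      obtain ⟨h1, h2⟩ := blkdec j.2 j'.2 hblk
      have hj : j = j' := Fin.ext h2
      rw [hσ] at hmach
      simp only [Sum.elim_inl, Sum.elim_inr, if_pos hi] at hmach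
      subst hj
      exact hνne j q' hmach.symm
    · exfalso
      have hi' : i' = c j' := hb
      simp only [blk_inl, blk_inr] at hblk
      obtain ⟨h1, h2⟩ := blkdec j.2 j'.2 hblk
      have hj : j = j' := Fin.ext h2
      rw [hσ] at hmach
      simp only [Sum.elim_inl, Sum.elim_inr, if_pos hi'] at hmach
      subst hj
      exact hνne j q hmach
    · simp only [blk_inr] at hblk
      obtain ⟨h1, h2⟩ := blkdec j.2 j'.2 hblk
      have hℓ : ℓ = ℓ' := Fin.ext h1
      have hj : j = j' := Fin.ext h2
      subst hℓ; subst hj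
      rw [hσ] at hmach
      simp only [Sum.elim_inr] at hmach
      have := hνinj j q q' hmach
      rw [this]
  -- feasibility: release dates
  have hrel : ∀ a, hsRelease n m k A a ≤ (σ a).2 := by
    rintro (⟨⟨ℓ, j, i⟩, hij⟩ | ⟨ℓ, j, q⟩)
    · by_cases hi : i = c j
      · rw [hσ]
        simp only [Sum.elim_inl, if_pos hi]
        rw [hsRelease, hi]
      · rw [hσ]
        simp only [Sum.elim_inl, if_neg hi]
        show (ℓ.1 * m + j.1) * (2*n) + i.1 ≤ ((k * (n - 1) + 1) * m + 1) * (2*n) + _ * (2*n)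
        have h1 := arith1 (2*n) (blk_lt (A := A) (Sum.inl ⟨(ℓ, j, i), hij⟩))
        rw [blk_inl] at h1
        have h2 : i.1 < n := i.2
        have h3 := arith1 (2*n) (show (k * (n - 1) + 1) * m < (k * (n - 1) + 1) * m + 1 by omega)
        omega
    · exact Nat.le_add_right _ _
  have key : ∀ x y : ℕ, x + 2*n ≤ y → ((2*n : ℕ) : ℤ) ≤ |(x:ℤ) - (y:ℤ)| := by
    intro x y h
    rw [abs_sub_comm, abs_of_nonneg (by push_cast; omega)]
    push_cast; omega
  have hsep : ∀ a b, a ≠ b → (σ a).1 = (σ b).1 →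
      ((2*n : ℕ) : ℤ) ≤ |((σ a).2 : ℤ) - ((σ b).2 : ℤ)| := by
    have main_main : ∀ a b, isMain a → isMain b → (σ a).1 = (σ b).1 → blk a < blk b →
        (σ a).2 + 2*n ≤ (σ b).2 := by
      intro a b ha hb hmach hblk
      have ea := hmainT a ha
      have eb := hmainT b hb
      rw [hmach] at ea
      rw [ea, eb]
      have h3 := arith1 (2*n) hblk
      omega
    have main_left : ∀ a b, isMain a → ¬ isMain b → (σ a).2 + 2*n ≤ (σ b).2 := by
      intro a b ha hb
      have eb := hord2T b hb
      have h1 := hmainM a ha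
      rw [eb]
      omega
    intro a b hab hmach
    by_cases ha : isMain a <;> by_cases hb : isMain b
    · have hne : blk a ≠ blk b := fun h => hab (huniq a b ha hb h hmach)
      rcases Nat.lt_or_ge (blk a) (blk b) with h | h
      · exact key _ _ (main_main a b ha hb hmach h)
      · rw [abs_sub_comm]
        exact key _ _ (main_main b a hb ha hmach.symm (by omega))
    · exact key _ _ (main_left a b ha hb)
    · rw [abs_sub_comm]
      exact key _ _ (main_left b a hb ha)
    · have ea := hord2T a ha
      have eb := hord2T b hb
      have hne : (ord a).1 ≠ (ord b).1 := by
        intro h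
        exact hab (ord.injective (Fin.ext h))
      rcases Nat.lt_or_ge (ord a).1 (ord b).1 with h | h
      · apply key
        rw [ea, eb]
        have h3 := arith1 (2*n) h
        omega
      · rw [abs_sub_comm]
        apply key
        rw [ea, eb]
        have h3 := arith1 (2*n) (show (ord b).1 < (ord a).1 by omega)
        omega
  refine ⟨σ, ⟨hrel, hsep⟩, ?_⟩
  -- counting early jobs
  set f : Fin (k*(n-1)+1) × Fin m × Fin k → HSJob n m k A := fun x =>
    if h : x.2.2.1 < k - 1 then Sum.inr (x.1, x.2.1, ⟨x.2.2.1, h⟩)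
    else Sum.inl ⟨(x.1, x.2.1, c x.2.1), hcA x.2.1⟩ with hf
  have hfearly : ∀ x, (σ (f x)).2 + 2*n ≤ hsDue n m k A (f x) := by
    rintro ⟨ℓ, j, q⟩
    simp only [hf]
    by_cases h : q.1 < k - 1
    · simp only [h, ↓reduceDIte]
      show (ℓ.1 * m + j.1) * (2*n) + (e (ν j ⟨q.1, h⟩)).1 + 2*n
        ≤ (ℓ.1*m+j.1+1) * (2*n) + n
      have h2 : (e (ν j ⟨q.1, h⟩)).1 < n := Fin.is_lt _
      have h4 : (ℓ.1*m+j.1+1) * (2*n) = (ℓ.1*m+j.1) * (2*n) + 2*n := by ring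
      omega
    · simp only [h, ↓reduceDIte]
      show (σ (Sum.inl ⟨(ℓ, j, c j), hcA j⟩)).2 + 2*n ≤ (ℓ.1*m+j.1+1) * (2*n) + (c j).1
      rw [hσ]
      simp only [Sum.elim_inl, if_pos rfl]
      show (ℓ.1 * m + j.1) * (2*n) + (c j).1 + 2*n ≤ _
      have h4 : (ℓ.1*m+j.1+1) * (2*n) = (ℓ.1*m+j.1) * (2*n) + 2*n := by ring
      omega
  have hfinj : Function.Injective f := by
    rintro ⟨ℓ, j, q⟩ ⟨ℓ', j', q'⟩ h
    simp only [hf] at h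
    by_cases h1 : q.1 < k - 1 <;> by_cases h2 : q'.1 < k - 1
    · simp only [h1, h2, ↓reduceDIte] at h
      injection h with h
      simp only [Prod.mk.injEq] at h
      obtain ⟨hℓ, hj, hq⟩ := h
      subst hℓ; subst hj
      have hq' := congrArg Fin.val hq
      have : q = q' := Fin.ext (a := q) (b := q') hq'
      subst this; rfl

    · simp only [h1, h2, ↓reduceDIte] at h
      cases h
    · simp only [h1, h2, ↓reduceDIte] at h
      cases h
    · simp only [h1, h2, ↓reduceDIte] at h
      injection h with h
      simp only [Subtype.mk.injEq, Prod.mk.injEq] at h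
      obtain ⟨hℓ, hj, -⟩ := h
      subst hℓ; subst hj
      have hq1 := q.2
      have hq2 := q'.2
      have : q = q' := Fin.ext (by omega)
      subst this; rfl
  have hcard := le_earlyCount (2*n) (hsDue n m k A) σ f hfinj hfearly
  simp only [Fintype.card_prod, Fintype.card_fin] at hcard
  calc (k * (n - 1) + 1) * m * k = (k * (n-1) + 1) * (m * k) := by ring
    _ ≤ _ := hcard


lemma block_le {l l' jj jj' : ℕ} (hj : jj < m) (h : l < l') : l * m + jj ≤ l' * m + jj' := by
  have h2 := Nat.mul_le_mul_right m (show l + 1 ≤ l' by omega)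
  rw [Nat.add_mul, Nat.one_mul] at h2
  omega

lemma block_lt (ℓ : Fin (k*(n-1)+1)) (j : Fin m) : ℓ.1 * m + j.1 < (k * (n - 1) + 1) * m := by
  have h1 := ℓ.2; have h2 := j.2
  calc ℓ.1 * m + j.1 < ℓ.1 * m + m := by omega
    _ = (ℓ.1 + 1) * m := by ring
    _ ≤ (k*(n-1)+1) * m := Nat.mul_le_mul_right _ (by omega)

lemma backward (hn : 1 ≤ n) (hm : 1 ≤ m) (hk : 1 ≤ k)
    (σ : HSJob n m k A → Fin k × ℕ)
    (hfeas : FeasibleSched k (2 * n) (hsRelease n m k A) σ)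
    (hcount : (k * (n - 1) + 1) * m * k ≤ earlyCount (2 * n) (hsDue n m k A) σ) :
    ∃ X : Finset (Fin n), X.card ≤ k ∧ ∀ j : Fin m, (X ∩ A j).Nonempty := by
  classical
  obtain ⟨hrel, hsep⟩ := hfeas
  rw [earlyCount] at hcount
  set E := Finset.univ.filter (fun a => (σ a).2 + 2 * n ≤ hsDue n m k A a) with hE
  -- bounds on early start times
  have hlow : ∀ a ∈ E, blk a * (2*n) ≤ (σ a).2 ∧ (σ a).2 ≤ blk a * (2*n) + n := by
    intro a ha
    rw [hE, Finset.mem_filter] at ha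
    have h1 := hrel a
    obtain (⟨⟨ℓ, j, i⟩, hij⟩ | ⟨ℓ, j, q⟩) := a
    · have hr : hsRelease n m k A (Sum.inl ⟨(ℓ,j,i),hij⟩) = (ℓ.1*m+j.1)*(2*n) + i.1 := rfl
      have hd : hsDue n m k A (Sum.inl ⟨(ℓ,j,i),hij⟩) = (ℓ.1*m+j.1+1)*(2*n) + i.1 := rfl
      have hb : blk (A := A) (Sum.inl ⟨(ℓ,j,i),hij⟩) = ℓ.1*m+j.1 := rfl
      have hexp : (ℓ.1*m+j.1+1)*(2*n) = (ℓ.1*m+j.1)*(2*n) + 2*n := by ring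
      have hi : i.1 < n := i.2
      have h2 := ha.2
      rw [hd] at h2
      rw [hr] at h1
      rw [hb]
      omega
    · have hr : hsRelease n m k A (Sum.inr (ℓ,j,q)) = (ℓ.1*m+j.1)*(2*n) := rfl
      have hd : hsDue n m k A (Sum.inr (ℓ,j,q)) = (ℓ.1*m+j.1+1)*(2*n) + n := rfl
      have hb : blk (A := A) (Sum.inr (ℓ,j,q)) = ℓ.1*m+j.1 := rfl
      have hexp : (ℓ.1*m+j.1+1)*(2*n) = (ℓ.1*m+j.1)*(2*n) + 2*n := by ring
      have h2 := ha.2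
      rw [hd] at h2
      rw [hr] at h1
      rw [hb]
      omega
  -- real early jobs start exactly at their release date
  have hreal_pos : ∀ (ℓ : Fin (k*(n-1)+1)) (j : Fin m) (i : Fin n) (hij : i ∈ A j),
      Sum.inl ⟨(ℓ,j,i),hij⟩ ∈ E →
      (σ (Sum.inl ⟨(ℓ,j,i),hij⟩)).2 = (ℓ.1*m+j.1)*(2*n) + i.1 := by
    intro ℓ j i hij ha
    replace ha := (show ∀ a ∈ E, a ∈ Finset.univ ∧ (σ a).2 + 2 * n ≤ hsDue n m k A a from
      fun a ha' => by rw [hE, Finset.mem_filter] at ha'; exact ha') _ ha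
    have h1 := hrel (Sum.inl ⟨(ℓ,j,i),hij⟩)
    have hr : hsRelease n m k A (Sum.inl ⟨(ℓ,j,i),hij⟩) = (ℓ.1*m+j.1)*(2*n) + i.1 := rfl
    have hd : hsDue n m k A (Sum.inl ⟨(ℓ,j,i),hij⟩) = (ℓ.1*m+j.1+1)*(2*n) + i.1 := rfl
    have hexp : (ℓ.1*m+j.1+1)*(2*n) = (ℓ.1*m+j.1)*(2*n) + 2*n := by ring
    have h2 := ha.2
    rw [hd] at h2
    rw [hr] at h1
    omega
  -- no two early jobs share a block and a machine
  have hginj : ∀ a ∈ E, ∀ b ∈ E, blk a = blk b → (σ a).1 = (σ b).1 → a = b := by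
    intro a ha b hb hblk hmach
    by_contra hne
    have h := hsep a b hne hmach
    obtain ⟨la, ha2⟩ := hlow a ha
    obtain ⟨lb, hb2⟩ := hlow b hb
    rw [hblk] at la ha2
    rcases le_abs.mp h with h' | h' <;> · push_cast at h'; omega
  -- the map to (block, machine) pairs
  set g : HSJob n m k A → ℕ × Fin k := fun a => (blk a, (σ a).1) with hg
  have hgInj : Set.InjOn g E := by
    intro a ha b hb hab
    rw [hg] at hab
    exact hginj a ha b hb (congrArg Prod.fst hab) (congrArg Prod.snd hab)
  have himg : Finset.image g E ⊆
      (Finset.range ((k*(n-1)+1)*m)) ×ˢ (Finset.univ : Finset (Fin k)) := by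
    intro x hx
    rw [Finset.mem_image] at hx
    obtain ⟨a, _, rfl⟩ := hx
    rw [Finset.mem_product, Finset.mem_range]
    exact ⟨blk_lt a, Finset.mem_univ _⟩
  have hprodcard : ((Finset.range ((k*(n-1)+1)*m)) ×ˢ (Finset.univ : Finset (Fin k))).card
      = (k*(n-1)+1) * m * k := by
    rw [Finset.card_product, Finset.card_range, Finset.card_univ, Fintype.card_fin]
  have himgcard : (Finset.image g E).card = E.card := Finset.card_image_of_injOn hgInj
  have himg_eq : Finset.image g E
      = (Finset.range ((k*(n-1)+1)*m)) ×ˢ (Finset.univ : Finset (Fin k)) := by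
    apply Finset.eq_of_subset_of_card_le himg
    rw [hprodcard, himgcard]
    exact hcount
  have hsurj : ∀ b : ℕ, b < (k*(n-1)+1)*m → ∀ q : Fin k,
      ∃ a, a ∈ E ∧ blk a = b ∧ (σ a).1 = q := by
    intro b hb q
    have hx : (b, q) ∈ Finset.image g E := by
      rw [himg_eq, Finset.mem_product, Finset.mem_range]
      exact ⟨hb, Finset.mem_univ _⟩
    rw [Finset.mem_image] at hx
    obtain ⟨a, ha, hga⟩ := hx
    rw [hg] at hga
    exact ⟨a, ha, congrArg Prod.fst hga, congrArg Prod.snd hga⟩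
  -- the unique early job in each (block, machine) slot
  set F : Fin ((k*(n-1)+1)*m) → Fin k → HSJob n m k A :=
    fun b q => (hsurj b.1 b.2 q).choose with hFdef
  have hF : ∀ b q, F b q ∈ E ∧ blk (F b q) = b.1 ∧ (σ (F b q)).1 = q :=
    fun b q => (hsurj b.1 b.2 q).choose_spec
  set ω : Fin ((k*(n-1)+1)*m) → Fin k → ℕ :=
    fun b q => (σ (F b q)).2 - b.1 * (2*n) with hωdef
  have hω : ∀ b q, (σ (F b q)).2 = b.1 * (2*n) + ω b q ∧ ω b q ≤ n := by
    intro b q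
    obtain ⟨h1, h2⟩ := hlow (F b q) (hF b q).1
    rw [(hF b q).2.1] at h1 h2
    simp only [hωdef]
    omega
  -- offsets are monotone along a machine
  have hmono1 : ∀ (b b' : Fin ((k*(n-1)+1)*m)) q, b.1 + 1 = b'.1 → ω b q ≤ ω b' q := by
    intro b b' q hbb
    have hne : F b q ≠ F b' q := by
      intro h
      have h1 := (hF b q).2.1
      rw [h, (hF b' q).2.1] at h1
      omega
    have h := hsep _ _ hne (by rw [(hF b q).2.2, (hF b' q).2.2])
    have h1 := (hω b q).1
    have h2 := (hω b' q).1
    have h3 := (hω b q).2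
    have h4 := (hω b' q).2
    have hexp : b'.1 * (2*n) = b.1 * (2*n) + 2*n := by rw [← hbb]; ring
    rcases le_abs.mp h with h' | h' <;> · push_cast at h'; omega
  have hmono : ∀ (b b' : Fin ((k*(n-1)+1)*m)) q, b.1 ≤ b'.1 → ω b q ≤ ω b' q := by
    intro b b' q h
    obtain ⟨d, hd⟩ : ∃ d, b'.1 = b.1 + d := ⟨b'.1 - b.1, by omega⟩
    clear h
    induction d generalizing b' with
    | zero =>
      have : b = b' := Fin.ext (by omega)
      rw [this]
    | succ d ih =>
      have hlt : b.1 + d < (k*(n-1)+1)*m := by have := b'.2; omega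
      exact le_trans (ih ⟨b.1 + d, hlt⟩ rfl) (hmono1 ⟨b.1 + d, hlt⟩ b' q (by simp; omega))
  -- offset of a real early job is its element
  have hreal_ω : ∀ (b : Fin ((k*(n-1)+1)*m)) (q : Fin k) ℓ (j : Fin m) (i : Fin n) hij,
      F b q = Sum.inl ⟨(ℓ,j,i),hij⟩ → ω b q = i.1 := by
    intro b q ℓ j i hij h
    have h1 := (hω b q).1
    have h3 := (hF b q).2.1
    rw [h, blk_inl] at h3
    have h2 := hreal_pos ℓ j i hij (h ▸ (hF b q).1)
    rw [h, h2, h3] at h1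
    omega
  -- every block contains an early real job
  have hblockreal : ∀ b : Fin ((k*(n-1)+1)*m), ∃ (q : Fin k) (ℓ : Fin (k*(n-1)+1))
      (j : Fin m) (i : Fin n) (hij : i ∈ A j), F b q = Sum.inl ⟨(ℓ,j,i),hij⟩ := by
    intro b
    by_contra hcon
    have hdum : ∀ q : Fin k, ∃ (l : Fin (k*(n-1)+1)) (jj : Fin m) (r : Fin (k-1)), F b q = Sum.inr (l, jj, r) := by
      intro q
      match hFbq : F b q with
      | Sum.inl ⟨(ℓ,j,i),hij⟩ => exact absurd ⟨q, ℓ, j, i, hij, hFbq⟩ hcon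
      | Sum.inr (l,jj,r) => exact ⟨l, jj, r, rfl⟩
    choose l j r hjr using hdum
    have hcardlt : Fintype.card (Fin (k-1)) < Fintype.card (Fin k) := by
      simp only [Fintype.card_fin]; omega
    obtain ⟨q, q', hne, heq⟩ := Fintype.exists_ne_map_eq_of_card_lt r hcardlt
    have h1 := (hF b q).2.1
    rw [hjr q, blk_inr] at h1
    have h2 := (hF b q').2.1
    rw [hjr q', blk_inr] at h2
    obtain ⟨hl, hj⟩ := blkdec (j q).2 (j q').2 (h1.trans h2.symm)
    have hlq : l q = l q' := Fin.ext hl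
    have hjq : j q = j q' := Fin.ext hj
    have hFF : F b q = F b q' := by
      rw [hjr q, hjr q', hlq, hjq, heq]
    apply hne
    calc q = (σ (F b q)).1 := ((hF b q).2.2).symm
      _ = (σ (F b q')).1 := by rw [hFF]
      _ = q' := (hF b q').2.2
  -- per (row, set) real early jobs with matching indices
  have hblockreal' : ∀ (ℓ : Fin (k*(n-1)+1)) (j : Fin m), ∃ (q : Fin k) (i : Fin n),
      i ∈ A j ∧ ∃ hij, F ⟨ℓ.1*m+j.1, block_lt ℓ j⟩ q = Sum.inl ⟨(ℓ,j,i),hij⟩ := by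
    intro ℓ j
    obtain ⟨q, ℓ', j', i, hij, hFq⟩ := hblockreal ⟨ℓ.1*m+j.1, block_lt ℓ j⟩
    have h1 := (hF ⟨ℓ.1*m+j.1, block_lt ℓ j⟩ q).2.1
    rw [hFq, blk_inl] at h1
    obtain ⟨hl, hj⟩ := blkdec j'.2 j.2 h1
    have hle : ℓ' = ℓ := Fin.ext hl
    have hje : j' = j := Fin.ext hj
    subst hle; subst hje
    exact ⟨q, i, hij, hij, hFq⟩
  -- spoiled rows
  set Real : Fin ((k*(n-1)+1)*m) → Fin k → Prop := fun b q =>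
    ∃ (ℓ : Fin (k*(n-1)+1)) (j : Fin m) (i : Fin n) (hij : i ∈ A j), F b q = Sum.inl ⟨(ℓ,j,i),hij⟩ with hRealdef
  have hreal_lt : ∀ b q, Real b q → ω b q < n := by
    intro b q hr
    obtain ⟨ℓ, j, i, hij, h⟩ := hr
    rw [hreal_ω b q ℓ j i hij h]
    exact i.2
  set Spoil : Fin k → Fin (k*(n-1)+1) → Prop := fun q ℓ =>
    ∃ jj : Fin m × Fin m, jj.1.1 ≤ jj.2.1 ∧
      Real ⟨ℓ.1*m+jj.1.1, block_lt ℓ jj.1⟩ q ∧ Real ⟨ℓ.1*m+jj.2.1, block_lt ℓ jj.2⟩ q ∧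
      ω ⟨ℓ.1*m+jj.1.1, block_lt ℓ jj.1⟩ q < ω ⟨ℓ.1*m+jj.2.1, block_lt ℓ jj.2⟩ q with hSpoildef
  have hspoil_card : ∀ q : Fin k,
      (Finset.univ.filter (fun ℓ => Spoil q ℓ)).card ≤ n - 1 := by
    intro q
    have hcard : (Finset.Ico 1 n).card = n - 1 := by rw [Nat.card_Ico]
    refine le_trans ?_ hcard.le
    set ψ : Fin (k*(n-1)+1) → ℕ := fun ℓ =>
      if h : Spoil q ℓ then ω ⟨ℓ.1*m+(Exists.choose h).2.1, block_lt ℓ (Exists.choose h).2⟩ q else 0 with hψdef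
    apply Finset.card_le_card_of_injOn ψ
    · intro ℓ hl
      rw [Finset.mem_coe, Finset.mem_filter] at hl
      have hsp := hl.2
      obtain ⟨hle2, hr1, hr2, hlt2⟩ := Exists.choose_spec hsp
      rw [hψdef]
      simp only
      rw [dif_pos hsp]
      rw [Finset.mem_coe, Finset.mem_Ico]
      exact ⟨by omega, hreal_lt _ _ hr2⟩
    · intro ℓ hl ℓ' hl' heq
      rw [Finset.mem_coe, Finset.mem_filter] at hl hl'
      by_contra hne
      have hlt : ∀ (x y : Fin (k*(n-1)+1)), x.1 < y.1 → x ∈ Finset.univ.filter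
          (fun ℓ => Spoil q ℓ) → y ∈ Finset.univ.filter (fun ℓ => Spoil q ℓ) →
          ψ x < ψ y := by
        intro x y hxy hx hy
        rw [Finset.mem_filter] at hx hy
        have hspx := hx.2
        have hspy := hy.2
        obtain ⟨hlex, hrx1, hrx2, hltx⟩ := Exists.choose_spec hspx
        obtain ⟨hley, hry1, hry2, hlty⟩ := Exists.choose_spec hspy
        rw [hψdef]
        simp only
        rw [dif_pos hspx, dif_pos hspy]
        have hmid := hmono ⟨x.1*m+(Exists.choose hspx).2.1, block_lt x (Exists.choose hspx).2⟩
          ⟨y.1*m+(Exists.choose hspy).1.1, block_lt y (Exists.choose hspy).1⟩ q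
          (block_le ((Exists.choose hspx).2.2) hxy)
        omega
      rcases Nat.lt_or_ge ℓ.1 ℓ'.1 with h | h
      · have := hlt ℓ ℓ' h (Finset.mem_filter.mpr hl) (Finset.mem_filter.mpr hl')
        omega
      · have hne2 : ℓ'.1 < ℓ.1 := by
          rcases Nat.lt_or_ge ℓ'.1 ℓ.1 with h2 | h2
          · exact h2
          · exact absurd (Fin.ext (by omega : ℓ.1 = ℓ'.1)) hne
        have := hlt ℓ' ℓ hne2 (Finset.mem_filter.mpr hl') (Finset.mem_filter.mpr hl)
        omega
  -- there is a good row
  obtain ⟨ℓ₀, hgood⟩ : ∃ ℓ : Fin (k*(n-1)+1), ∀ q, ¬ Spoil q ℓ := by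
    by_contra hcon
    push_neg at hcon
    have hsub : (Finset.univ : Finset (Fin (k*(n-1)+1))) ⊆
        Finset.univ.biUnion (fun q : Fin k => Finset.univ.filter (fun ℓ => Spoil q ℓ)) := by
      intro ℓ _
      rw [Finset.mem_biUnion]
      obtain ⟨q, hq⟩ := hcon ℓ
      exact ⟨q, Finset.mem_univ _, Finset.mem_filter.mpr ⟨Finset.mem_univ _, hq⟩⟩
    have h1 := Finset.card_le_card hsub
    have h2 := Finset.card_biUnion_le (s := (Finset.univ : Finset (Fin k)))
      (t := fun q => Finset.univ.filter (fun ℓ => Spoil q ℓ))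
    have h3 : ∑ q : Fin k, (Finset.univ.filter (fun ℓ => Spoil q ℓ)).card ≤ k * (n-1) := by
      calc ∑ q : Fin k, (Finset.univ.filter (fun ℓ => Spoil q ℓ)).card
          ≤ ∑ _q : Fin k, (n-1) := Finset.sum_le_sum (fun q _ => hspoil_card q)
        _ = k * (n-1) := by rw [Finset.sum_const, Finset.card_univ, Fintype.card_fin,
            smul_eq_mul]
    rw [Finset.card_univ, Fintype.card_fin] at h1
    omega
  -- select the hitting elements
  have hsel := fun j => hblockreal' ℓ₀ j
  choose Q I hIA hIF using hsel
  have hQI : ∀ j j', Q j = Q j' → I j = I j' := by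
    have aux : ∀ j j', j.1 ≤ j'.1 → Q j = Q j' → I j = I j' := by
      intro j j' hle hQ
      by_contra hne
      obtain ⟨hij, hF1⟩ := hIF j
      obtain ⟨hij', hF2⟩ := hIF j'
      have hω1 := hreal_ω _ _ _ _ _ _ hF1
      have hω2 := hreal_ω _ _ _ _ _ _ hF2
      rw [← hQ] at hω2
      have hmono' := hmono ⟨ℓ₀.1*m+j.1, block_lt ℓ₀ j⟩ ⟨ℓ₀.1*m+j'.1, block_lt ℓ₀ j'⟩ (Q j)
        (show ℓ₀.1*m+j.1 ≤ ℓ₀.1*m+j'.1 by omega)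
      have hvne : (I j).1 ≠ (I j').1 := fun hh => hne (Fin.ext hh)
      have hineq : ω ⟨ℓ₀.1*m+j.1, block_lt ℓ₀ j⟩ (Q j)
          < ω ⟨ℓ₀.1*m+j'.1, block_lt ℓ₀ j'⟩ (Q j) := by omega
      exact hgood (Q j) ⟨(j, j'), hle, ⟨ℓ₀, j, I j, hij, hF1⟩,
        ⟨ℓ₀, j', I j', hij', by rw [hQ]; exact hF2⟩, hineq⟩
    intro j j' hQ
    rcases Nat.le_total j.1 j'.1 with h | h
    · exact aux j j' h hQ
    · exact (aux j' j h hQ.symm).symm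
  -- the hitting set
  set X := Finset.image I Finset.univ with hX
  obtain ⟨ρ, hρ⟩ : ∃ ρ : Fin k → Fin n, ∀ j, ρ (Q j) = I j := by
    refine ⟨fun q => if h : ∃ j, Q j = q then I (Exists.choose h) else I ⟨0, hm⟩, fun j => ?_⟩
    dsimp only
    rw [dif_pos ⟨j, rfl⟩]
    exact hQI _ _ (Exists.choose_spec (⟨j, rfl⟩ : ∃ j', Q j' = Q j))
  refine ⟨X, ?_, fun j => ⟨I j, Finset.mem_inter.mpr
    ⟨Finset.mem_image_of_mem I (Finset.mem_univ j), hIA j⟩⟩⟩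
  have hXeq : X = Finset.image (fun j => ρ (Q j)) Finset.univ := by
    rw [hX]
    apply Finset.image_congr
    intro j _
    exact (hρ j).symm
  have hsub2 : Finset.image (fun j => ρ (Q j)) Finset.univ ⊆
      Finset.image ρ (Finset.image Q Finset.univ) := by
    intro x hx
    rw [Finset.mem_image] at hx
    obtain ⟨j, _, rfl⟩ := hx
    exact Finset.mem_image_of_mem ρ (Finset.mem_image_of_mem Q (Finset.mem_univ j))
  calc X.card = (Finset.image (fun j => ρ (Q j)) Finset.univ).card := by rw [hXeq]
    _ ≤ (Finset.image ρ (Finset.image Q Finset.univ)).card := Finset.card_le_card hsub2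
    _ ≤ (Finset.image Q Finset.univ).card := Finset.card_image_le
    _ ≤ (Finset.univ : Finset (Fin k)).card := Finset.card_le_card (Finset.subset_univ _)
    _ = k := by rw [Finset.card_univ, Fintype.card_fin]

end HS5

/-- the Hitting Set instance has a hitting set of size at most `k` iff the
constructed scheduling instance has a feasible schedule with at least `(k(n-1)+1)·m·k`
early jobs. -/
theorem statement5 (n m k : ℕ) (hn : 1 ≤ n) (hm : 1 ≤ m) (hk : 1 ≤ k)
    (A : Fin m → Finset (Fin n)) :
    (∃ X : Finset (Fin n), X.card ≤ k ∧ ∀ j : Fin m, (X ∩ A j).Nonempty) ↔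
      (∃ σ : HSJob n m k A → Fin k × ℕ,
        FeasibleSched k (2 * n) (hsRelease n m k A) σ ∧
        (k * (n - 1) + 1) * m * k ≤ earlyCount (2 * n) (hsDue n m k A) σ) := by
  constructor
  · rintro ⟨X, hXk, hXA⟩
    exact HS5.forward hn hm hk X hXk hXA
  · rintro ⟨σ, hfeas, hcount⟩
    exact HS5.backward hn hm hk σ hfeas hcount
end

section
/- Fix ℓ ∈ {0,…,k(n−1)} and j ∈ {0,…,m−1}. In any feasible schedule for the constructed scheduling instance I', if a job starts at a time s with (ℓm + j)·p ≤ s ≤ (ℓm + j)·p + n and this job is early, then this job is either one of the dummy jobs D^ℓ_{j,1},…,D^ℓ_{j,k−1} or a job J^ℓ_{j,i} for some u_i ∈ A_j. -/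
lemma hs_block_eq {a b c d m : ℕ} (hc : c < m) (hd : d < m) (h : a * m + c = b * m + d) :
    a = b ∧ c = d := by
  rcases Nat.lt_trichotomy a b with hab | hab | hab
  · exfalso
    have h2 : (a + 1) * m ≤ b * m := Nat.mul_le_mul_right m hab
    nlinarith
  · subst hab; omega
  · exfalso
    have h2 : (b + 1) * m ≤ a * m := Nat.mul_le_mul_right m hab
    nlinarith

/-- in any feasible schedule for the constructed instance, an early job
whose starting time `s` satisfies `(ℓm+j)p ≤ s ≤ (ℓm+j)p + n` is either one of the dummy
jobs `D^ℓ_{j,q}` or a job `J^ℓ_{j,i}` for some `u_i ∈ A j`. -/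
theorem statement6 (n m k : ℕ) (hn : 1 ≤ n) (hm : 1 ≤ m) (hk : 1 ≤ k)
    (A : Fin m → Finset (Fin n))
    (ℓ : Fin (k * (n - 1) + 1)) (j : Fin m)
    (σ : HSJob n m k A → Fin k × ℕ)
    (hσ : FeasibleSched k (2 * n) (hsRelease n m k A) σ)
    (a : HSJob n m k A)
    (hs₁ : (ℓ.1 * m + j.1) * (2 * n) ≤ (σ a).2)
    (hs₂ : (σ a).2 ≤ (ℓ.1 * m + j.1) * (2 * n) + n)
    (hearly : (σ a).2 + 2 * n ≤ hsDue n m k A a) :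
    (∃ q : Fin (k - 1), a = Sum.inr (ℓ, j, q)) ∨
      (∃ (i : Fin n) (hi : i ∈ A j), a = Sum.inl ⟨(ℓ, j, i), hi⟩) := by
  have hrel := hσ.1 a
  cases a with
  | inl x =>
    obtain ⟨⟨ℓ', j', i⟩, hi⟩ := x
    simp only [hsRelease, hsDue] at hrel hearly
    have hkey : ℓ'.1 * m + j'.1 = ℓ.1 * m + j.1 := by
      rcases Nat.lt_trichotomy (ℓ.1 * m + j.1) (ℓ'.1 * m + j'.1) with h | h | h
      · exfalso
        have h2 : (ℓ.1 * m + j.1 + 1) * (2 * n) ≤ (ℓ'.1 * m + j'.1) * (2 * n) :=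
          Nat.mul_le_mul_right _ h
        have e : (ℓ.1 * m + j.1 + 1) * (2 * n) = (ℓ.1 * m + j.1) * (2 * n) + 2 * n := by ring
        linarith
      · omega
      · exfalso
        have h2 : (ℓ'.1 * m + j'.1 + 1) * (2 * n) ≤ (ℓ.1 * m + j.1) * (2 * n) :=
          Nat.mul_le_mul_right _ h
        have e : (ℓ'.1 * m + j'.1 + 1) * (2 * n) = (ℓ'.1 * m + j'.1) * (2 * n) + 2 * n := by ring
        have hi2 := i.2
        linarith
    obtain ⟨h1, h2⟩ := hs_block_eq j'.2 j.2 hkey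
    have hℓ : ℓ' = ℓ := Fin.ext h1
    have hj : j' = j := Fin.ext h2
    subst hℓ; subst hj
    exact Or.inr ⟨i, hi, rfl⟩
  | inr x =>
    obtain ⟨ℓ', j', q⟩ := x
    simp only [hsRelease, hsDue] at hrel hearly
    have hkey : ℓ'.1 * m + j'.1 = ℓ.1 * m + j.1 := by
      rcases Nat.lt_trichotomy (ℓ.1 * m + j.1) (ℓ'.1 * m + j'.1) with h | h | h
      · exfalso
        have h2 : (ℓ.1 * m + j.1 + 1) * (2 * n) ≤ (ℓ'.1 * m + j'.1) * (2 * n) :=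
          Nat.mul_le_mul_right _ h
        have e : (ℓ.1 * m + j.1 + 1) * (2 * n) = (ℓ.1 * m + j.1) * (2 * n) + 2 * n := by ring
        linarith
      · omega
      · exfalso
        have h2 : (ℓ'.1 * m + j'.1 + 1) * (2 * n) ≤ (ℓ.1 * m + j.1) * (2 * n) :=
          Nat.mul_le_mul_right _ h
        have e : (ℓ'.1 * m + j'.1 + 1) * (2 * n) = (ℓ'.1 * m + j'.1) * (2 * n) + 2 * n := by ring
        linarith
    obtain ⟨h1, h2⟩ := hs_block_eq j'.2 j.2 hkey
    have hℓ : ℓ' = ℓ := Fin.ext h1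
    have hj : j' = j := Fin.ext h2
    subst hℓ; subst hj
    exact Or.inl ⟨q, rfl⟩
end

section
/- Let m ≥ 1 and p ≥ 1 be integers and let T ⊆ ℕ be a finite set. Let X be the set of all resource profiles, i.e., vectors x = (x_1,…,x_m) with x_i ∈ T for all i, x_1 ≤ x_2 ≤ … ≤ x_m, and x_m − x_1 ≤ p. Then |X| ≤ |T| · (p+1)^{m−1}. -/
/-- the set of resource profiles — nondecreasing vectors
`x : Fin m → ℕ` with entries in `T` and `x_m - x_1 ≤ p` — has cardinality at most
`|T| · (p+1)^(m-1)`. -/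
theorem statement9 (m p : ℕ) (hm : 1 ≤ m) (hp : 1 ≤ p) (T : Finset ℕ) :
    Set.ncard {x : Fin m → ℕ | (∀ i, x i ∈ T) ∧ Monotone x ∧
        x ⟨m - 1, by omega⟩ - x ⟨0, by omega⟩ ≤ p}
      ≤ T.card * (p + 1) ^ (m - 1) := by
  set s : Set (Fin m → ℕ) := {x : Fin m → ℕ | (∀ i, x i ∈ T) ∧ Monotone x ∧
        x ⟨m - 1, by omega⟩ - x ⟨0, by omega⟩ ≤ p} with hs
  set F : Finset (ℕ × (Fin (m-1) → ℕ)) :=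
    T ×ˢ Fintype.piFinset (fun _ : Fin (m-1) => Finset.range (p+1)) with hF
  have hFcard : F.card = T.card * (p + 1) ^ (m - 1) := by
    simp [hF, Finset.card_product, Fintype.card_piFinset]
  set f : (Fin m → ℕ) → ℕ × (Fin (m-1) → ℕ) :=
    fun x => (x ⟨0, by omega⟩, fun i => x ⟨i.1 + 1, by omega⟩ - x ⟨0, by omega⟩) with hf
  have hsub : f '' s ⊆ ↑F := by
    rintro _ ⟨x, ⟨hxT, hxmono, hxp⟩, rfl⟩
    simp only [hF, Finset.coe_product, Set.mem_prod, hf, Finset.mem_coe,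
      Fintype.mem_piFinset, Finset.mem_range]
    refine ⟨hxT _, fun i => ?_⟩
    have h1 : x ⟨i.1 + 1, by omega⟩ ≤ x ⟨m - 1, by omega⟩ :=
      hxmono (by simp [Fin.le_def])
    have h2 : x ⟨0, by omega⟩ ≤ x ⟨i.1 + 1, by omega⟩ :=
      hxmono (by simp [Fin.le_def])
    omega
  have hinj : Set.InjOn f s := by
    rintro x ⟨hxT, hxmono, hxp⟩ y ⟨hyT, hymono, hyp⟩ hxy
    have h0 : x ⟨0, by omega⟩ = y ⟨0, by omega⟩ := congrArg Prod.fst hxy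
    funext i
    rcases Nat.eq_zero_or_pos i.1 with h | h
    · have : i = ⟨0, by omega⟩ := Fin.ext h
      rw [this]; exact h0
    · have hi : i.1 - 1 < m - 1 := by omega
      have := congrFun (congrArg Prod.snd hxy) ⟨i.1 - 1, hi⟩
      simp only [hf] at this
      have hix : (⟨i.1 - 1 + 1, by omega⟩ : Fin m) = i := Fin.ext (by simp; omega)
      rw [hix] at this
      have hx0 : x ⟨0, by omega⟩ ≤ x i := hxmono (by simp [Fin.le_def])
      have hy0 : y ⟨0, by omega⟩ ≤ y i := hymono (by simp [Fin.le_def])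
      omega
  calc s.ncard = (f '' s).ncard := (Set.ncard_image_of_injOn hinj).symm
    _ ≤ (↑F : Set _).ncard := Set.ncard_le_ncard hsub (Finset.finite_toSet F)
    _ = F.card := Set.ncard_coe_finset F
    _ = T.card * (p + 1) ^ (m - 1) := hFcard
end

section
/- Let A_frac be an M × n₂ totally unimodular matrix, let A_int be an M × n₁ matrix with integer entries, let b ∈ ℤ^M, and let c ∈ ℝ^{n₁+n₂}. Consider the mixed feasible set F of all vectors x = (x_int, x_frac) with x_int ∈ ℝ^{n₁} having all entries nonnegative integers, x_frac ∈ ℝ^{n₂} with all entries nonnegative reals, and A_int·x_int + A_frac·x_frac ≤ b componentwise. If there exists x* ∈ F with c^⊤x* ≥ c^⊤x for all x ∈ F (i.e., the mixed integer linear program has an optimal solution), then there exists x' ∈ F whose entries are all integers and with c^⊤x' = c^⊤x*. -/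
lemma lemA {n : ℕ} (B : Matrix (Fin n) (Fin n) ℝ)
    (hBint : ∀ i j, ∃ z : ℤ, B i j = z) (hU : IsUnit B)
    (hdet : B.det ∈ Set.range SignType.cast)
    (w : Fin n → ℝ) (hw : ∀ i, ∃ z : ℤ, w i = z)
    (y : Fin n → ℝ) (hy : B.mulVec y = w) :
    ∀ j, ∃ z : ℤ, y j = z := by
  choose Bz hBz using hBint
  choose wz hwz using hw
  set Bz' : Matrix (Fin n) (Fin n) ℤ := Matrix.of Bz with hBz'
  have hmap : Bz'.map (Int.castRingHom ℝ) = B := by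
    ext i j; simp [hBz', ← hBz]
  have hdetcast : ((Bz'.det : ℤ) : ℝ) = B.det := by
    rw [← hmap, ← RingHom.mapMatrix_apply, ← RingHom.map_det]; rfl
  have hdetne : B.det ≠ 0 := (Matrix.isUnit_iff_isUnit_det B).mp hU |>.ne_zero
  have hdetunit : IsUnit Bz'.det := by
    obtain ⟨s, hs⟩ := hdet
    rcases s with _ | _ | _
    · exfalso; apply hdetne; rw [← hs]; simp
    · have h1 : ((Bz'.det : ℤ) : ℝ) = ((-1 : ℤ) : ℝ) := by
        rw [hdetcast, ← hs]; simp
      rw [Int.cast_injective h1]; exact IsUnit.neg isUnit_one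
    · have h1 : ((Bz'.det : ℤ) : ℝ) = ((1 : ℤ) : ℝ) := by
        rw [hdetcast, ← hs]; simp
      rw [Int.cast_injective h1]; exact isUnit_one
  have hinv : (Bz'⁻¹.map (Int.castRingHom ℝ)) * B = 1 := by
    rw [← hmap, ← Matrix.map_mul, Matrix.nonsing_inv_mul Bz' hdetunit]
    ext i j; simp [Matrix.one_apply]
  have hyform : y = (Bz'⁻¹.map (Int.castRingHom ℝ)).mulVec w := by
    rw [← hy, Matrix.mulVec_mulVec, hinv, Matrix.one_mulVec]
  intro j
  refine ⟨∑ k, Bz'⁻¹ j k * wz k, ?_⟩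
  rw [hyform]
  simp only [Matrix.mulVec, dotProduct, Matrix.map_apply, hwz]
  push_cast
  rfl

lemma lemB {n : ℕ} (S : Set (Fin n → ℝ)) (hS : Submodule.span ℝ S ≠ ⊤) :
    ∃ v : Fin n → ℝ, v ≠ 0 ∧ ∀ r ∈ S, ∑ j, r j * v j = 0 := by
  classical
  let e : EuclideanSpace ℝ (Fin n) ≃ₗ[ℝ] (Fin n → ℝ) :=
    (WithLp.linearEquiv 2 ℝ (Fin n → ℝ))
  let S' : Set (EuclideanSpace ℝ (Fin n)) := e.symm '' S
  have hspan : Submodule.span ℝ S' ≠ ⊤ := by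
    intro h
    apply hS
    have := congrArg (Submodule.map (e : EuclideanSpace ℝ (Fin n) →ₗ[ℝ] (Fin n → ℝ))) h
    rw [Submodule.map_span, Submodule.map_top, LinearEquiv.range] at this
    rw [← this]
    congr 1
    simp [S', Set.image_image]
  have horth : (Submodule.span ℝ S')ᗮ ≠ ⊥ := by
    intro h
    rw [Submodule.orthogonal_eq_bot_iff] at h
    exact hspan h
  obtain ⟨v, hv, hv0⟩ := Submodule.exists_mem_ne_zero_of_ne_bot horth
  refine ⟨e v, fun h => hv0 (by simpa [e] using h), fun r hr => ?_⟩
  have : inner ℝ (e.symm r) v = (0 : ℝ) :=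
    (Submodule.mem_orthogonal _ v).mp hv _ (Submodule.subset_span ⟨r, hr, rfl⟩)
  rw [← this]
  rw [PiLp.inner_apply]
  simp [e, RCLike.inner_apply, mul_comm]

lemma lemTop {n : ℕ} {ι : Type} [Fintype ι] [DecidableEq ι] (C : Matrix ι (Fin n) ℝ) (hTU : C.IsTotallyUnimodular)
    (e : ι → ℤ) (y : Fin n → ℝ)
    (hspan : Submodule.span ℝ
      {r : Fin n → ℝ | ∃ i, (∑ j, C i j * y j = (e i : ℝ)) ∧ r = C i} = ⊤) :
    ∀ j, ∃ z : ℤ, y j = z := by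
  classical
  set T : Set (Fin n → ℝ) := {r | ∃ i, (∑ j, C i j * y j = (e i : ℝ)) ∧ r = C i} with hT
  obtain ⟨b, hbT, hbspan, hbLI⟩ := exists_linearIndependent ℝ T
  rw [hspan] at hbspan
  haveI : Fintype b := hbLI.setFinite.fintype
  have hcard : Fintype.card b = n := by
    have h1 := finrank_span_set_eq_card hbLI
    rw [hbspan] at h1
    simp only [finrank_top] at h1
    rw [Set.toFinset_card] at h1
    rw [← h1, Module.finrank_pi]
    simp
  let eqv : b ≃ Fin n := Fintype.equivFinOfCardEq hcard
  have hmem : ∀ w : b, ∃ i, (∑ j, C i j * y j = (e i : ℝ)) ∧ (w : Fin n → ℝ) = C i :=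
    fun w => hbT w.2
  choose idx hidx1 hidx2 using hmem
  set σ : Fin n → ι := fun p => idx (eqv.symm p) with hσdef
  have hσ : Function.Injective σ := by
    intro p q hpq
    have : ((eqv.symm p : b) : Fin n → ℝ) = ((eqv.symm q : b) : Fin n → ℝ) := by
      rw [hidx2 (eqv.symm p), hidx2 (eqv.symm q)]
      exact congrArg C hpq
    exact eqv.symm.injective (Subtype.ext this)
  set B : Matrix (Fin n) (Fin n) ℝ := C.submatrix σ id with hBdef
  have hrows : ∀ p, B p = ((eqv.symm p : b) : Fin n → ℝ) := by
    intro p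
    rw [hidx2]
    rfl
  have hLIrows : LinearIndependent ℝ (fun p => B p) := by
    have : LinearIndependent ℝ (fun p : Fin n => ((eqv.symm p : b) : Fin n → ℝ)) :=
      hbLI.comp _ eqv.symm.injective
    simpa only [← hrows] using this
  have hU : IsUnit B := Matrix.linearIndependent_rows_iff_isUnit.mp hLIrows
  have hdet : B.det ∈ Set.range SignType.cast := hTU n σ id hσ Function.injective_id
  have hBint : ∀ p q, ∃ z : ℤ, B p q = z := by
    intro p q
    obtain ⟨s, hs⟩ := hTU.apply (σ p) q
    rcases s with _ | _ | _
    · refine ⟨0, ?_⟩; show C (σ p) q = _; rw [← hs]; simp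
    · refine ⟨-1, ?_⟩; show C (σ p) q = _; rw [← hs]; simp
    · refine ⟨1, ?_⟩; show C (σ p) q = _; rw [← hs]; simp
  have hy : B.mulVec y = fun p => ((e (σ p) : ℤ) : ℝ) := by
    ext p
    simp only [Matrix.mulVec, dotProduct, hBdef, Matrix.submatrix_apply, id]
    exact hidx1 (eqv.symm p)
  exact lemA B hBint hU hdet _ (fun p => ⟨e (σ p), rfl⟩) y hy

lemma lemC {n : ℕ} {ι : Type} [Fintype ι] [DecidableEq ι] (C : Matrix ι (Fin n) ℝ) (hTU : C.IsTotallyUnimodular)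
    (hcol : ∀ v : Fin n → ℝ, v ≠ 0 → ∃ i, ∑ j, C i j * v j ≠ 0)
    (e : ι → ℤ) (c : Fin n → ℝ) :
    ∀ k : ℕ, ∀ y : Fin n → ℝ,
    (∀ i, ∑ j, C i j * y j ≤ (e i : ℝ)) →
    (∀ z : Fin n → ℝ, (∀ i, ∑ j, C i j * z j ≤ (e i : ℝ)) →
      ∑ j, c j * z j ≤ ∑ j, c j * y j) →
    n ≤ k + Module.finrank ℝ (Submodule.span ℝ
      {r : Fin n → ℝ | ∃ i, (∑ j, C i j * y j = (e i : ℝ)) ∧ r = C i}) →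
    ∃ y' : Fin n → ℝ, (∀ i, ∑ j, C i j * y' j ≤ (e i : ℝ)) ∧ (∀ j, ∃ z : ℤ, y' j = z) ∧
      ∑ j, c j * y' j = ∑ j, c j * y j := by
  intro k
  induction k with
  | zero =>
    intro y hfeas hopt hrank
    refine ⟨y, hfeas, lemTop C hTU e y ?_, rfl⟩
    by_contra hsp
    have h1 : Module.finrank ℝ (Submodule.span ℝ
        {r : Fin n → ℝ | ∃ i, (∑ j, C i j * y j = (e i : ℝ)) ∧ r = C i}) <
        Module.finrank ℝ (Fin n → ℝ) :=
      Submodule.finrank_lt hsp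
    rw [Module.finrank_pi, Fintype.card_fin] at h1
    omega
  | succ k ih =>
    intro y hfeas hopt hrank
    set T : Set (Fin n → ℝ) := {r | ∃ i, (∑ j, C i j * y j = (e i : ℝ)) ∧ r = C i} with hT
    by_cases hsp : Submodule.span ℝ T = ⊤
    · exact ⟨y, hfeas, lemTop C hTU e y hsp, rfl⟩
    -- get a direction orthogonal to all tight rows with some strictly positive row product
    obtain ⟨v₀, hv₀ne, hv₀orth⟩ := lemB T hsp
    obtain ⟨i₀, hi₀⟩ := hcol v₀ hv₀ne
    have hV : ∃ v : Fin n → ℝ, v ≠ 0 ∧ (∀ r ∈ T, ∑ j, r j * v j = 0) ∧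
        ∃ i, 0 < ∑ j, C i j * v j := by
      rcases lt_or_gt_of_ne hi₀ with h | h
      · refine ⟨fun j => -v₀ j, ?_, ?_, ⟨i₀, ?_⟩⟩
        · intro hc
          apply hv₀ne
          funext j
          have := congrFun hc j
          simpa [neg_eq_zero] using this
        · intro r hr
          have := hv₀orth r hr
          simp only [mul_neg, Finset.sum_neg_distrib]
          rw [this]; ring
        · have : ∑ j, C i₀ j * (-v₀ j) = -∑ j, C i₀ j * v₀ j := by
            simp [Finset.sum_neg_distrib]
          rw [this]; linarith
      · exact ⟨v₀, hv₀ne, hv₀orth, ⟨i₀, h⟩⟩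
    obtain ⟨v, hvne, hvorth, i₀', hi₀'⟩ := hV
    -- orthogonality extends to the span
    have hspanorth : ∀ r ∈ Submodule.span ℝ T, ∑ j, r j * v j = 0 := by
      intro r hr
      set φ : (Fin n → ℝ) →ₗ[ℝ] ℝ :=
        { toFun := fun x => ∑ j, x j * v j
          map_add' := by intro a b; simp [add_mul, Finset.sum_add_distrib]
          map_smul' := by intro s a; simp [mul_assoc, Finset.mul_sum] } with hφ
      have hle : Submodule.span ℝ T ≤ LinearMap.ker φ := by
        rw [Submodule.span_le]
        intro x hx
        simpa [hφ] using hvorth x hx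
      simpa [hφ] using hle hr
    -- movement in any direction orthogonal to tight rows stays feasible for small s
    have hmove : ∀ w : Fin n → ℝ, (∀ r ∈ T, ∑ j, r j * w j = 0) →
        ∃ s : ℝ, 0 < s ∧ ∀ i, ∑ j, C i j * (y j + s * w j) ≤ (e i : ℝ) := by
      intro w hworth
      classical
      set Dfin : Finset ι := Finset.univ.filter (fun i => 0 < ∑ j, C i j * w j) with hD
      have hexpand : ∀ (s : ℝ) i, ∑ j, C i j * (y j + s * w j)
          = (∑ j, C i j * y j) + s * ∑ j, C i j * w j := by
        intro s i
        rw [Finset.mul_sum]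
        rw [← Finset.sum_add_distrib]
        congr 1; funext j; ring
      have hnottight : ∀ i ∈ Dfin, ∑ j, C i j * y j < (e i : ℝ) := by
        intro i hi
        rcases lt_or_eq_of_le (hfeas i) with h | h
        · exact h
        · exfalso
          have : (C i : Fin n → ℝ) ∈ T := ⟨i, h, rfl⟩
          have := hworth _ this
          rw [hD] at hi
          simp only [Finset.mem_filter] at hi
          rw [this] at hi
          exact lt_irrefl 0 hi.2
      rcases Finset.eq_empty_or_nonempty Dfin with hDe | hDne
      · refine ⟨1, one_pos, fun i => ?_⟩
        have hw : ∑ j, C i j * w j ≤ 0 := by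
          by_contra hc
          push_neg at hc
          have : i ∈ Dfin := by rw [hD]; simp [hc]
          rw [hDe] at this; exact absurd this (Finset.notMem_empty i)
        rw [hexpand]
        have := hfeas i
        nlinarith
      · set s : ℝ := Dfin.inf' hDne
          (fun i => ((e i : ℝ) - ∑ j, C i j * y j) / (∑ j, C i j * w j)) with hs
        have hspos : 0 < s := by
          rw [hs]
          apply Finset.lt_inf'_iff hDne (f := fun i =>
            ((e i : ℝ) - ∑ j, C i j * y j) / (∑ j, C i j * w j)) |>.mpr
          intro i hi
          have h1 := hnottight i hi
          have h2 : 0 < ∑ j, C i j * w j := by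
            rw [hD] at hi; simpa using (Finset.mem_filter.mp hi).2
          exact div_pos (by linarith) h2
        refine ⟨s, hspos, fun i => ?_⟩
        rw [hexpand]
        by_cases hi : i ∈ Dfin
        · have h2 : 0 < ∑ j, C i j * w j := by
            rw [hD] at hi; simpa using (Finset.mem_filter.mp hi).2
          have h3 : s ≤ ((e i : ℝ) - ∑ j, C i j * y j) / (∑ j, C i j * w j) :=
            Finset.inf'_le _ hi
          have h4 : s * (∑ j, C i j * w j) ≤ (e i : ℝ) - ∑ j, C i j * y j := by
            rw [← le_div_iff₀ h2]; exact h3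
          linarith
        · have hw : ∑ j, C i j * w j ≤ 0 := by
            by_contra hc
            push_neg at hc
            exact hi (by rw [hD]; simp [hc])
          have := hfeas i
          nlinarith
    -- the objective is orthogonal to v
    have hcv : ∑ j, c j * v j = 0 := by
      obtain ⟨s₁, hs₁, hf₁⟩ := hmove v hvorth
      obtain ⟨s₂, hs₂, hf₂⟩ := hmove (fun j => -v j) (by
        intro r hr
        have := hvorth r hr
        simp only [mul_neg, Finset.sum_neg_distrib]
        rw [this]; ring)
      have h1 := hopt _ hf₁
      have h2 := hopt _ hf₂
      have e1 : ∑ j, c j * (y j + s₁ * v j) = (∑ j, c j * y j) + s₁ * ∑ j, c j * v j := by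
        rw [Finset.mul_sum, ← Finset.sum_add_distrib]; congr 1; funext j; ring
      have e2 : ∑ j, c j * (y j + s₂ * -v j) = (∑ j, c j * y j) - s₂ * ∑ j, c j * v j := by
        rw [Finset.mul_sum, ← Finset.sum_sub_distrib]
        congr 1; funext j; ring
      rw [e1] at h1
      rw [e2] at h2
      nlinarith
    -- now take the maximal step in direction v
    classical
    set Dfin : Finset ι := Finset.univ.filter (fun i => 0 < ∑ j, C i j * v j) with hD
    have hDne : Dfin.Nonempty := ⟨i₀', by rw [hD]; simp [hi₀']⟩
    have hexpand : ∀ (s : ℝ) i, ∑ j, C i j * (y j + s * v j)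
        = (∑ j, C i j * y j) + s * ∑ j, C i j * v j := by
      intro s i
      rw [Finset.mul_sum, ← Finset.sum_add_distrib]
      congr 1; funext j; ring
    have hnottight : ∀ i ∈ Dfin, ∑ j, C i j * y j < (e i : ℝ) := by
      intro i hi
      rcases lt_or_eq_of_le (hfeas i) with h | h
      · exact h
      · exfalso
        have hmemT : (C i : Fin n → ℝ) ∈ T := ⟨i, h, rfl⟩
        have := hvorth _ hmemT
        rw [hD] at hi
        simp only [Finset.mem_filter] at hi
        rw [this] at hi
        exact lt_irrefl 0 hi.2
    set t : ℝ := Dfin.inf' hDne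
        (fun i => ((e i : ℝ) - ∑ j, C i j * y j) / (∑ j, C i j * v j)) with ht
    have htpos : 0 < t := by
      rw [ht]
      apply Finset.lt_inf'_iff hDne (f := fun i =>
        ((e i : ℝ) - ∑ j, C i j * y j) / (∑ j, C i j * v j)) |>.mpr
      intro i hi
      have h1 := hnottight i hi
      have h2 : 0 < ∑ j, C i j * v j := by
        rw [hD] at hi; simpa using (Finset.mem_filter.mp hi).2
      exact div_pos (by linarith) h2
    set y₂ : Fin n → ℝ := fun j => y j + t * v j with hy₂
    have hfeas₂ : ∀ i, ∑ j, C i j * y₂ j ≤ (e i : ℝ) := by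
      intro i
      rw [hy₂]
      simp only []
      rw [hexpand]
      by_cases hi : i ∈ Dfin
      · have h2 : 0 < ∑ j, C i j * v j := by
          rw [hD] at hi; simpa using (Finset.mem_filter.mp hi).2
        have h3 : t ≤ ((e i : ℝ) - ∑ j, C i j * y j) / (∑ j, C i j * v j) :=
          Finset.inf'_le _ hi
        have h4 : t * (∑ j, C i j * v j) ≤ (e i : ℝ) - ∑ j, C i j * y j := by
          rw [← le_div_iff₀ h2]; exact h3
        linarith
      · have hw : ∑ j, C i j * v j ≤ 0 := by
          by_contra hc
          push_neg at hc
          exact hi (by rw [hD]; simp [hc])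
        have := hfeas i
        nlinarith
    have hobj₂ : ∑ j, c j * y₂ j = ∑ j, c j * y j := by
      rw [hy₂]
      simp only []
      have : ∑ j, c j * (y j + t * v j) = (∑ j, c j * y j) + t * ∑ j, c j * v j := by
        rw [Finset.mul_sum, ← Finset.sum_add_distrib]; congr 1; funext j; ring
      rw [this, hcv]; ring
    have hopt₂ : ∀ z : Fin n → ℝ, (∀ i, ∑ j, C i j * z j ≤ (e i : ℝ)) →
        ∑ j, c j * z j ≤ ∑ j, c j * y₂ j := by
      intro z hz
      rw [hobj₂]; exact hopt z hz
    -- the tight set strictly grows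
    obtain ⟨i₁, hi₁mem, hi₁⟩ := Finset.exists_mem_eq_inf' hDne
        (fun i => ((e i : ℝ) - ∑ j, C i j * y j) / (∑ j, C i j * v j))
    set T₂ : Set (Fin n → ℝ) := {r | ∃ i, (∑ j, C i j * y₂ j = (e i : ℝ)) ∧ r = C i} with hT₂
    have hsub : T ⊆ T₂ := by
      intro r hr
      obtain ⟨i, htight, rfl⟩ := hr
      refine ⟨i, ?_, rfl⟩
      rw [hy₂]
      simp only []
      rw [hexpand, hvorth _ ⟨i, htight, rfl⟩]
      rw [htight]; ring
    have hi₁v : 0 < ∑ j, C i₁ j * v j := by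
      rw [hD] at hi₁mem; simpa using (Finset.mem_filter.mp hi₁mem).2
    have hi₁tight : (C i₁ : Fin n → ℝ) ∈ T₂ := by
      refine ⟨i₁, ?_, rfl⟩
      rw [hy₂]
      simp only []
      rw [hexpand]
      have : t = ((e i₁ : ℝ) - ∑ j, C i₁ j * y j) / (∑ j, C i₁ j * v j) := by
        rw [ht, hi₁]
      rw [this, div_mul_cancel₀ _ (ne_of_gt hi₁v)]
      ring
    have hnotin : (C i₁ : Fin n → ℝ) ∉ Submodule.span ℝ T := by
      intro hc
      have := hspanorth _ hc
      rw [this] at hi₁v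
      exact lt_irrefl 0 hi₁v
    have hlt : Submodule.span ℝ T < Submodule.span ℝ T₂ := by
      refine lt_of_le_of_ne (Submodule.span_mono hsub) ?_
      intro hc
      exact hnotin (hc ▸ Submodule.subset_span hi₁tight)
    have hfr : Module.finrank ℝ (Submodule.span ℝ T) <
        Module.finrank ℝ (Submodule.span ℝ T₂) :=
      Submodule.finrank_lt_finrank_of_lt hlt
    obtain ⟨y', hy'feas, hy'int, hy'obj⟩ := ih y₂ hfeas₂ hopt₂ (by rw [← hT₂]; omega)
    exact ⟨y', hy'feas, hy'int, by rw [hy'obj, hobj₂]⟩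

lemma lemLP {M n : ℕ} (A : Matrix (Fin M) (Fin n) ℝ) (hTU : A.IsTotallyUnimodular)
    (d : Fin M → ℤ) (c : Fin n → ℝ) (y : Fin n → ℝ)
    (hy0 : ∀ j, 0 ≤ y j) (hyd : ∀ i, ∑ j, A i j * y j ≤ (d i : ℝ))
    (hopt : ∀ z : Fin n → ℝ, (∀ j, 0 ≤ z j) → (∀ i, ∑ j, A i j * z j ≤ (d i : ℝ)) →
      ∑ j, c j * z j ≤ ∑ j, c j * y j) :
    ∃ y' : Fin n → ℝ, (∀ j, 0 ≤ y' j) ∧ (∀ i, ∑ j, A i j * y' j ≤ (d i : ℝ)) ∧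
      (∀ j, ∃ z : ℤ, y' j = z) ∧ ∑ j, c j * y' j = ∑ j, c j * y j := by
  classical
  set C : Matrix (Fin M ⊕ Fin n) (Fin n) ℝ :=
    Matrix.fromRows A (-(1 : Matrix (Fin n) (Fin n) ℝ)) with hC
  have hCrow : ∀ (p : Fin n) (j : Fin n), C (Sum.inr p) j = -(if p = j then (1:ℝ) else 0) := by
    intro p j
    rw [hC]
    simp [Matrix.fromRows_apply_inr, Matrix.one_apply]
  have hCsum : ∀ (p : Fin n) (w : Fin n → ℝ), ∑ j, C (Sum.inr p) j * w j = -(w p) := by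
    intro p w
    simp only [hCrow]
    rw [Finset.sum_eq_single p]
    · simp
    · intro b _ hb; simp [Ne.symm hb]
    · intro hb; exact absurd (Finset.mem_univ p) hb
  have hTUC : C.IsTotallyUnimodular := by
    rw [hC]
    apply hTU.fromRows_unitlike
    intro _ i
    refine ⟨i, SignType.neg, funext fun j => ?_⟩
    simp only [Matrix.neg_apply, Matrix.one_apply, Pi.single_apply, eq_comm, SignType.coe_neg,
      SignType.coe_one]
    split <;> simp
  have hcol : ∀ v : Fin n → ℝ, v ≠ 0 → ∃ i, ∑ j, C i j * v j ≠ 0 := by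
    intro v hv
    obtain ⟨j₀, hj₀⟩ := Function.ne_iff.mp hv
    exact ⟨Sum.inr j₀, by rw [hCsum]; simpa using hj₀⟩
  set e : Fin M ⊕ Fin n → ℤ := Sum.elim d 0 with he
  have hfeas : ∀ i, ∑ j, C i j * y j ≤ (e i : ℝ) := by
    rintro (i | p)
    · simpa [hC, he] using hyd i
    · rw [hCsum]
      simp only [he, Sum.elim_inr]
      push_cast
      simpa using hy0 p
  have hoptC : ∀ z : Fin n → ℝ, (∀ i, ∑ j, C i j * z j ≤ (e i : ℝ)) →
      ∑ j, c j * z j ≤ ∑ j, c j * y j := by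
    intro z hz
    apply hopt
    · intro p
      have := hz (Sum.inr p)
      rw [hCsum] at this
      simp only [he, Sum.elim_inr, Pi.zero_apply, Int.cast_zero] at this
      linarith
    · intro i
      have := hz (Sum.inl i)
      simpa [hC, he] using this
  obtain ⟨y', hy'feas, hy'int, hy'obj⟩ := lemC C hTUC hcol e c n y hfeas hoptC
    (Nat.le_add_right n _)
  refine ⟨y', ?_, ?_, hy'int, hy'obj⟩
  · intro p
    have := hy'feas (Sum.inr p)
    rw [hCsum] at this
    simp only [he, Sum.elim_inr, Pi.zero_apply, Int.cast_zero] at this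
    linarith
  · intro i
    have := hy'feas (Sum.inl i)
    simpa [hC, he] using this




/-- a mixed integer linear program whose fractional constraint matrix is
totally unimodular, whose integer constraint matrix has integer entries and whose right-hand
side is integral, has an all-integer optimal solution whenever it has an optimal solution. -/
theorem statement11 (M n₁ n₂ : ℕ)
    (Aint : Matrix (Fin M) (Fin n₁) ℝ) (hAint : ∀ i j, ∃ z : ℤ, Aint i j = z)
    (Afrac : Matrix (Fin M) (Fin n₂) ℝ) (hTU : Afrac.IsTotallyUnimodular)
    (b : Fin M → ℤ) (c₁ : Fin n₁ → ℝ) (c₂ : Fin n₂ → ℝ)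
    (F : Set ((Fin n₁ → ℝ) × (Fin n₂ → ℝ)))
    (hF : F = {x | (∀ j, ∃ z : ℤ, 0 ≤ z ∧ x.1 j = (z : ℝ)) ∧ (∀ j, 0 ≤ x.2 j) ∧
      ∀ i, (∑ j, Aint i j * x.1 j) + (∑ j, Afrac i j * x.2 j) ≤ (b i : ℝ)})
    (xstar : (Fin n₁ → ℝ) × (Fin n₂ → ℝ)) (hxstar : xstar ∈ F)
    (hopt : ∀ x ∈ F, (∑ j, c₁ j * x.1 j) + (∑ j, c₂ j * x.2 j) ≤
      (∑ j, c₁ j * xstar.1 j) + (∑ j, c₂ j * xstar.2 j)) :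
    ∃ x' ∈ F, (∀ j, ∃ z : ℤ, x'.1 j = (z : ℝ)) ∧ (∀ j, ∃ z : ℤ, x'.2 j = (z : ℝ)) ∧
      (∑ j, c₁ j * x'.1 j) + (∑ j, c₂ j * x'.2 j) =
        (∑ j, c₁ j * xstar.1 j) + (∑ j, c₂ j * xstar.2 j) := by
  rw [hF] at hxstar
  obtain ⟨hx1, hx2, hx3⟩ := hxstar
  choose a ha using hAint
  choose xz hxz0 hxz using hx1
  set d : Fin M → ℤ := fun i => b i - ∑ j, a i j * xz j with hd
  have hdcast : ∀ i, (d i : ℝ) = (b i : ℝ) - ∑ j, Aint i j * xstar.1 j := by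
    intro i
    rw [hd]
    push_cast
    congr 1
    apply Finset.sum_congr rfl
    intro j _
    rw [ha, hxz]
  have hyd : ∀ i, ∑ j, Afrac i j * xstar.2 j ≤ (d i : ℝ) := by
    intro i
    rw [hdcast]
    linarith [hx3 i]
  have hoptLP : ∀ z : Fin n₂ → ℝ, (∀ j, 0 ≤ z j) → (∀ i, ∑ j, Afrac i j * z j ≤ (d i : ℝ)) →
      ∑ j, c₂ j * z j ≤ ∑ j, c₂ j * xstar.2 j := by
    intro z hz0 hzd
    have hmem : (xstar.1, z) ∈ F := by
      rw [hF]
      refine ⟨fun j => ⟨xz j, hxz0 j, hxz j⟩, hz0, fun i => ?_⟩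
      have := hzd i
      rw [hdcast] at this
      simp only
      linarith
    have := hopt _ hmem
    simp only at this
    linarith
  obtain ⟨y', hy'0, hy'd, hy'int, hy'obj⟩ :=
    lemLP Afrac hTU d c₂ xstar.2 hx2 hyd hoptLP
  refine ⟨(xstar.1, y'), ?_, fun j => ⟨xz j, hxz j⟩, hy'int, ?_⟩
  · rw [hF]
    refine ⟨fun j => ⟨xz j, hxz0 j, hxz j⟩, hy'0, fun i => ?_⟩
    have := hy'd i
    rw [hdcast] at this
    simp only
    linarith
  · simp only
    rw [hy'obj]
end

section
/- Let I be an instance of P|r_j, p_j = p|Σ w_j U_j. If I admits a feasible schedule whose weighted number of early jobs is W, then there exists an assignment of nonnegative integers y_{T'} (for every type T' ⊆ R), y_t (for every t ∈ T), and y_{j,t} (for every admissible pair (j,t)) satisfying constraints (1)–(4) and whose objective value Σ_{j,t} w_j·y_{j,t} equals W. -/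
namespace SchedInstance

/-- The set `R` of distinct release dates. -/
def Rset (I : SchedInstance) : Finset ℕ := Finset.univ.image I.r

/-- The set of relevant starting time points `T = { r + p·ℓ : r ∈ R, ℓ ∈ {0,…,n} }`. -/
def Tset (I : SchedInstance) : Finset ℕ :=
  (I.Rset ×ˢ Finset.range (I.n + 1)).image (fun x => x.1 + I.p * x.2)

/-- Starting time `t` is available on a machine of type `T' ⊆ R` if `t = r + ℓ·p` for some
`r ∈ T'` and `ℓ ∈ {0,…,n}`, and `t + p ≤ r'` for every `r' ∈ T'` larger than `r` (in
particular `t + p` is at most the smallest element of `T'` larger than `r`). -/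
def AvailableOn (I : SchedInstance) (t : ℕ) (T' : Finset ℕ) : Prop :=
  ∃ r ∈ T', (∃ ℓ ∈ Finset.range (I.n + 1), t = r + I.p * ℓ) ∧
    ∀ r' ∈ T', r < r' → t + I.p ≤ r'

/-- The pair `(j,t)` is admissible if `t ∈ T`, `r_j ≤ t` and `t + p ≤ d_j`. -/
def Admissible (I : SchedInstance) (j : Fin I.n) (t : ℕ) : Prop :=
  t ∈ I.Tset ∧ I.r j ≤ t ∧ t + I.p ≤ I.d j

open Classical in
/-- The constraints (1)–(4) of the MILP formulation, for nonnegative integer variables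
`ys T'` (for types `T' ⊆ R`), `yt t` (for `t ∈ T`), and `yj j t` (for admissible pairs). -/
noncomputable def MILPConstraints (I : SchedInstance) (ys : Finset ℕ → ℕ) (yt : ℕ → ℕ)
    (yj : Fin I.n → ℕ → ℕ) : Prop :=
  (∑ T' ∈ I.Rset.powerset, ys T') ≤ I.m ∧
  (∀ t ∈ I.Tset,
    yt t = ∑ T' ∈ I.Rset.powerset.filter (fun T' => I.AvailableOn t T'), ys T') ∧
  (∀ t ∈ I.Tset,
    (∑ j ∈ Finset.univ.filter (fun j => I.Admissible j t), yj j t) ≤ yt t) ∧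
  (∀ j : Fin I.n, (∑ t ∈ I.Tset.filter (fun t => I.Admissible j t), yj j t) ≤ 1)

open Classical in
/-- The objective value `Σ_{(j,t) admissible} w_j · y_{j,t}` of an assignment. -/
noncomputable def MILPObjective (I : SchedInstance) (yj : Fin I.n → ℕ → ℕ) : ℕ :=
  ∑ j : Fin I.n, ∑ t ∈ I.Tset.filter (fun t => I.Admissible j t), I.w j * yj j t

end SchedInstance

namespace SchedInstance

variable (I : SchedInstance) (σ : Fin I.n → Fin I.m × ℕ)

open Classical in
noncomputable def predSet (j : Fin I.n) : Finset (Fin I.n) :=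
  Finset.univ.filter (fun j' => I.Early σ j' ∧ (σ j').1 = (σ j).1 ∧ (σ j').2 < (σ j).2)

open Classical in
noncomputable def ns (j : Fin I.n) : ℕ :=
  max (I.r j) ((I.predSet σ j).attach.sup (fun j' => ns j'.1 + I.p))
termination_by (σ j).2
decreasing_by
  have := j'.2
  simp only [predSet, Finset.mem_filter] at this
  exact this.2.2.2

open Classical in
noncomputable def lead (j : Fin I.n) : Fin I.n × ℕ :=
  if h : ∃ j' : {x // x ∈ I.predSet σ j}, ns I σ j = ns I σ j'.1 + I.p then
    ((lead h.choose.1).1, (lead h.choose.1).2 + 1)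
  else (j, 0)
termination_by (σ j).2
decreasing_by
  have := h.choose.2
  simp only [predSet, Finset.mem_filter] at this
  exact this.2.2.2


noncomputable def leader (j : Fin I.n) : Fin I.n := (lead I σ j).1
noncomputable def level (j : Fin I.n) : ℕ := (lead I σ j).2

lemma r_le_ns (j : Fin I.n) : I.r j ≤ ns I σ j := by
  rw [ns]; exact le_max_left _ _

lemma nsMono {j j' : Fin I.n} (hE : I.Early σ j') (hm : (σ j').1 = (σ j).1)
    (hlt : (σ j').2 < (σ j).2) : ns I σ j' + I.p ≤ ns I σ j := by
  have hmem : j' ∈ I.predSet σ j := by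
    simp [predSet, hE, hm, hlt]
  conv_rhs => rw [ns]
  exact le_trans (Finset.le_sup (f := fun x : {x // x ∈ I.predSet σ j} => ns I σ x.1 + I.p)
    (Finset.mem_attach _ ⟨j', hmem⟩)) (le_max_right _ _)

lemma eq_of_start_eq (hfeas : I.Feasible σ) {j j' : Fin I.n}
    (hm : (σ j).1 = (σ j').1) (hst : (σ j).2 = (σ j').2) : j = j' := by
  by_contra hne
  have h := hfeas.2 j j' hne hm
  rw [hst] at h
  simp at h
  have := I.hp
  omega

lemma start_add_p_le (hfeas : I.Feasible σ) {j j' : Fin I.n}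
    (hm : (σ j').1 = (σ j).1) (hlt : (σ j').2 < (σ j).2) : (σ j').2 + I.p ≤ (σ j).2 := by
  have hne : j' ≠ j := fun h => by subst h; omega
  have h := hfeas.2 j' j hne hm
  rw [abs_sub_comm] at h
  rw [abs_of_nonneg (by omega : (0:ℤ) ≤ ((σ j).2 : ℤ) - ((σ j').2 : ℤ))] at h
  omega

theorem ns_le_start (hfeas : I.Feasible σ) (j : Fin I.n) : ns I σ j ≤ (σ j).2 := by
  rw [ns]
  refine max_le (hfeas.1 j) (Finset.sup_le ?_)
  rintro ⟨j', hj'⟩ -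
  show ns I σ j' + I.p ≤ (σ j).2
  simp only [predSet, Finset.mem_filter] at hj'
  have hrec := ns_le_start hfeas j'
  have := start_add_p_le I σ hfeas hj'.2.2.1 hj'.2.2.2
  omega
termination_by (σ j).2
decreasing_by
  simp only [predSet, Finset.mem_filter] at hj'
  exact hj'.2.2.2

lemma ns_inj (hfeas : I.Feasible σ) {j j' : Fin I.n} (hE : I.Early σ j) (hE' : I.Early σ j')
    (hm : (σ j').1 = (σ j).1) (hns : ns I σ j = ns I σ j') : j = j' := by
  by_contra hne
  have hst : (σ j).2 ≠ (σ j').2 := fun h => hne (eq_of_start_eq I σ hfeas hm.symm h)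
  have hp := I.hp
  rcases lt_or_gt_of_ne hst with h | h
  · have := nsMono I σ hE (hm.symm) h; omega
  · have := nsMono I σ hE' hm h; omega

lemma start_lt_of_ns_lt (hfeas : I.Feasible σ) {j j' : Fin I.n} (hE : I.Early σ j)
    (hE' : I.Early σ j') (hm : (σ j).1 = (σ j').1) (h : ns I σ j < ns I σ j') :
    (σ j).2 < (σ j').2 := by
  have hp := I.hp
  rcases lt_trichotomy (σ j).2 (σ j').2 with hlt | heq | hgt
  · exact hlt
  · have := eq_of_start_eq I σ hfeas hm heq
    subst this
    omega
  · have := nsMono I σ hE' hm.symm hgt; omega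

lemma ns_cases (j : Fin I.n) :
    ns I σ j = I.r j ∨ ∃ j' ∈ I.predSet σ j, ns I σ j = ns I σ j' + I.p := by
  rcases max_choice (I.r j) ((I.predSet σ j).attach.sup (fun j' => ns I σ j'.1 + I.p)) with h | h
  · left; rw [ns]; exact h
  · rcases (I.predSet σ j).eq_empty_or_nonempty with he | hne
    · left
      rw [ns, he]
      simp
    · obtain ⟨b, hb, hsup⟩ := Finset.exists_mem_eq_sup (I.predSet σ j).attach
        (hne.attach) (fun j' => ns I σ j'.1 + I.p)
      right
      exact ⟨b.1, b.2, by rw [ns, h, hsup]⟩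

theorem chainInv (j : Fin I.n) (hE : I.Early σ j) :
    I.Early σ (leader I σ j) ∧ (σ (leader I σ j)).1 = (σ j).1 ∧
    (σ (leader I σ j)).2 ≤ (σ j).2 ∧
    ns I σ (leader I σ j) = I.r (leader I σ j) ∧
    ns I σ j = I.r (leader I σ j) + I.p * level I σ j ∧
    level I σ j ≤ (I.predSet σ j).card ∧
    lead I σ (leader I σ j) = (leader I σ j, 0) := by
  by_cases h : ∃ j' : {x // x ∈ I.predSet σ j}, ns I σ j = ns I σ j'.1 + I.p
  · have hlead : lead I σ j = ((lead I σ h.choose.1).1, (lead I σ h.choose.1).2 + 1) := by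
      rw [lead, dif_pos h]
    set pred := h.choose.1 with hpred
    have hmem := h.choose.2
    have hns : ns I σ j = ns I σ pred + I.p := h.choose_spec
    simp only [predSet, Finset.mem_filter] at hmem
    obtain ⟨-, hEp, hmp, hsp⟩ := hmem
    have ih := chainInv pred hEp
    have hl1 : leader I σ j = leader I σ pred := by rw [leader, hlead]; rfl
    have hl2 : level I σ j = level I σ pred + 1 := by rw [level, hlead]; rfl
    refine ⟨hl1 ▸ ih.1, hl1 ▸ (ih.2.1.trans hmp), ?_, hl1 ▸ ih.2.2.2.1, ?_, ?_, ?_⟩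
    · rw [hl1]; exact le_of_lt (lt_of_le_of_lt ih.2.2.1 hsp)
    · rw [hl1, hl2, hns, ih.2.2.2.2.1]; ring
    · rw [hl2]
      have hsub : insert pred (I.predSet σ pred) ⊆ I.predSet σ j := by
        intro x hx
        rcases Finset.mem_insert.mp hx with hx | hx
        · subst hx; simp [predSet, hEp, hmp, hsp]; exact ⟨hEp, hmp, hsp⟩
        · simp only [predSet, Finset.mem_filter] at hx ⊢
          exact ⟨Finset.mem_univ _, hx.2.1, hx.2.2.1.trans hmp, hx.2.2.2.trans hsp⟩
      have hnotmem : pred ∉ I.predSet σ pred := by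
        simp [predSet]
      calc level I σ pred + 1 ≤ (I.predSet σ pred).card + 1 := by
              have := ih.2.2.2.2.2.1; omega
        _ = (insert pred (I.predSet σ pred)).card := (Finset.card_insert_of_notMem hnotmem).symm
        _ ≤ (I.predSet σ j).card := Finset.card_le_card hsub
    · rw [hl1]; exact ih.2.2.2.2.2.2
  · have hlead : lead I σ j = (j, 0) := by rw [lead, dif_neg h]
    have hl1 : leader I σ j = j := by rw [leader, hlead]
    have hl2 : level I σ j = 0 := by rw [level, hlead]
    have hnsr : ns I σ j = I.r j := by
      rcases ns_cases I σ j with hc | ⟨j', hj', hc⟩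
      · exact hc
      · exact absurd ⟨⟨j', hj'⟩, hc⟩ h
    rw [hl1, hl2]
    exact ⟨hE, rfl, le_refl _, hnsr, by omega, by omega, hlead⟩
termination_by (σ j).2
decreasing_by exact hsp

theorem capture (hfeas : I.Feasible σ) (j : Fin I.n) (hE : I.Early σ j) (L : Fin I.n)
    (hEL : I.Early σ L) (hmach : (σ L).1 = (σ j).1) (hfix : lead I σ L = (L, 0))
    (h1 : ns I σ (leader I σ j) ≤ ns I σ L) (h2 : ns I σ L ≤ ns I σ j) :
    L = leader I σ j := by
  have hp := I.hp
  by_cases h : ∃ j' : {x // x ∈ I.predSet σ j}, ns I σ j = ns I σ j'.1 + I.p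
  · have hlead : lead I σ j = ((lead I σ h.choose.1).1, (lead I σ h.choose.1).2 + 1) := by
      rw [lead, dif_pos h]
    set pred := h.choose.1 with hpred
    have hmem := h.choose.2
    have hns : ns I σ j = ns I σ pred + I.p := h.choose_spec
    simp only [predSet, Finset.mem_filter] at hmem
    obtain ⟨-, hEp, hmp, hsp⟩ := hmem
    have hl1 : leader I σ j = leader I σ pred := by rw [leader, hlead]; rfl
    rcases eq_or_lt_of_le h2 with heq | hlt
    · -- ns L = ns j, so L = j, but j is not a leader
      have hLj : L = j := ns_inj I σ hfeas hEL hE hmach.symm heq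
      subst hLj
      -- hfix : lead j = (j,0), so leader j = j; but leader j = leader pred with smaller start
      have : leader I σ L = L := by rw [leader, hfix]
      rw [hl1] at this
      have ihp := chainInv I σ pred hEp
      have : (σ (leader I σ pred)).2 ≤ (σ pred).2 := ihp.2.2.1
      rw [‹leader I σ pred = L›] at this
      omega
    · -- ns L < ns j
      have hsL : (σ L).2 < (σ j).2 := start_lt_of_ns_lt I σ hfeas hEL hE hmach (by omega)
      have hmono : ns I σ L + I.p ≤ ns I σ j := nsMono I σ hEL hmach hsL
      have hle : ns I σ L ≤ ns I σ pred := by omega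
      rw [hl1] at h1 ⊢
      exact capture hfeas pred hEp L hEL (hmach.trans hmp.symm) hfix h1 hle
  · have hlead : lead I σ j = (j, 0) := by rw [lead, dif_neg h]
    have hl1 : leader I σ j = j := by rw [leader, hlead]
    rw [hl1] at h1 ⊢
    exact ns_inj I σ hfeas hEL hE hmach.symm (le_antisymm h2 h1)
termination_by (σ j).2
decreasing_by exact hsp

open Classical in
noncomputable def typ (i : Fin I.m) : Finset ℕ :=
  (Finset.univ.filter (fun j => I.Early σ j ∧ (σ j).1 = i)).image
    (fun j => I.r (leader I σ j))

lemma typ_subset (i : Fin I.m) : typ I σ i ⊆ I.Rset := by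
  classical
  intro x hx
  simp only [typ, Finset.mem_image, Finset.mem_filter] at hx
  obtain ⟨j, -, rfl⟩ := hx
  exact Finset.mem_image.mpr ⟨leader I σ j, Finset.mem_univ _, rfl⟩

lemma level_lt (j : Fin I.n) (hE : I.Early σ j) : level I σ j < I.n + 1 := by
  have h := (chainInv I σ j hE).2.2.2.2.2.1
  have : (I.predSet σ j).card ≤ I.n := by
    have := Finset.card_le_univ (I.predSet σ j)
    simpa using this
  omega

lemma ns_mem_Tset (j : Fin I.n) (hE : I.Early σ j) : ns I σ j ∈ I.Tset := by
  obtain ⟨hEl, -, -, -, hns, -, -⟩ := chainInv I σ j hE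
  refine Finset.mem_image.mpr ⟨(I.r (leader I σ j), level I σ j), ?_, hns.symm⟩
  refine Finset.mem_product.mpr ⟨Finset.mem_image.mpr ⟨leader I σ j, Finset.mem_univ _, rfl⟩, ?_⟩
  exact Finset.mem_range.mpr (level_lt I σ j hE)

lemma admissible_ns (hfeas : I.Feasible σ) (j : Fin I.n) (hE : I.Early σ j) :
    I.Admissible j (ns I σ j) := by
  refine ⟨ns_mem_Tset I σ j hE, r_le_ns I σ j, ?_⟩
  have := ns_le_start I σ hfeas j
  have hd := hE
  unfold Early at hd
  omega

theorem avail_ns (hfeas : I.Feasible σ) (j : Fin I.n) (hE : I.Early σ j) :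
    I.AvailableOn (ns I σ j) (typ I σ (σ j).1) := by
  classical
  have hp := I.hp
  obtain ⟨hEl, hml, hsl, hnsl, hns, hlev, hfixl⟩ := chainInv I σ j hE
  refine ⟨I.r (leader I σ j), ?_, ⟨level I σ j, Finset.mem_range.mpr (level_lt I σ j hE), hns⟩, ?_⟩
  · exact Finset.mem_image.mpr ⟨j, Finset.mem_filter.mpr ⟨Finset.mem_univ _, hE, rfl⟩, rfl⟩
  · intro r' hr' hlt
    simp only [typ, Finset.mem_image, Finset.mem_filter] at hr'
    obtain ⟨j₂, ⟨-, hE₂, hm₂⟩, rfl⟩ := hr'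
    obtain ⟨hEL, hmL, -, hnsL, -, -, hfixL⟩ := chainInv I σ j₂ hE₂
    set L := leader I σ j₂ with hLdef
    have hmLj : (σ L).1 = (σ j).1 := by rw [hmL, hm₂]
    rcases le_or_gt (ns I σ L) (ns I σ j) with hle | hgt
    · have : L = leader I σ j := by
        refine capture I σ hfeas j hE L hEL hmLj hfixL ?_ hle
        rw [hnsl, hnsL]; omega
      rw [this] at hnsL hlt
      omega
    · have hsLt : (σ j).2 < (σ L).2 := start_lt_of_ns_lt I σ hfeas hE hEL hmLj.symm hgt
      have := nsMono I σ hE hmLj.symm hsLt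
      rw [hnsL] at this
      omega

open Classical in
noncomputable def ysol : Finset ℕ → ℕ :=
  fun T' => (Finset.univ.filter (fun i : Fin I.m => typ I σ i = T')).card

open Classical in
noncomputable def ytsol : ℕ → ℕ :=
  fun t => ∑ T' ∈ I.Rset.powerset.filter (fun T' => I.AvailableOn t T'), ysol I σ T'

open Classical in
noncomputable def yjsol : Fin I.n → ℕ → ℕ :=
  fun j t => if I.Early σ j ∧ ns I σ j = t then 1 else 0

open Classical in
lemma c1 : (∑ T' ∈ I.Rset.powerset, ysol I σ T') ≤ I.m := by
  classical
  have h := Finset.card_eq_sum_card_fiberwise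
    (f := typ I σ) (s := (Finset.univ : Finset (Fin I.m))) (t := I.Rset.powerset)
    (fun i _ => Finset.mem_powerset.mpr (typ_subset I σ i))
  simp only [Finset.card_univ, Fintype.card_fin] at h
  have h2 : (∑ T' ∈ I.Rset.powerset, ysol I σ T')
      = ∑ T' ∈ I.Rset.powerset, (Finset.univ.filter (fun i => typ I σ i = T')).card :=
    Finset.sum_congr rfl (fun T' _ => rfl)
  rw [h2, ← h]

open Classical in
lemma yt_card (t : ℕ) :
    ytsol I σ t = (Finset.univ.filter (fun i => I.AvailableOn t (typ I σ i))).card := by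
  classical
  set M := Finset.univ.filter (fun i => I.AvailableOn t (typ I σ i)) with hM
  have h := Finset.card_eq_sum_card_fiberwise
    (f := typ I σ) (s := M) (t := I.Rset.powerset.filter (fun T' => I.AvailableOn t T'))
    (by
      intro i hi
      simp only [hM, Finset.mem_coe, Finset.mem_filter, Finset.mem_univ, true_and] at hi
      exact Finset.mem_filter.mpr ⟨Finset.mem_powerset.mpr (typ_subset I σ i), hi⟩)
  rw [ytsol, h]
  apply Finset.sum_congr rfl
  intro T' hT'
  have hav : I.AvailableOn t T' := (Finset.mem_filter.mp hT').2
  have hMf : Finset.filter (fun i => typ I σ i = T') M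
      = Finset.filter (fun i => typ I σ i = T') Finset.univ := by
    apply Finset.Subset.antisymm (Finset.filter_subset_filter _ (Finset.subset_univ M))
    intro i hi
    simp only [Finset.mem_filter, Finset.mem_univ, true_and] at hi
    refine Finset.mem_filter.mpr ⟨?_, hi⟩
    rw [hM]
    exact Finset.mem_filter.mpr ⟨Finset.mem_univ _, hi ▸ hav⟩
  rw [hMf]
  rfl

open Classical in
lemma c3 (hfeas : I.Feasible σ) (t : ℕ) :
    (∑ j ∈ Finset.univ.filter (fun j => I.Admissible j t), yjsol I σ j t) ≤ ytsol I σ t := by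
  classical
  rw [yt_card]
  have hL : (∑ j ∈ Finset.univ.filter (fun j => I.Admissible j t), yjsol I σ j t)
      = ((Finset.univ.filter (fun j => I.Admissible j t)).filter
          (fun j => I.Early σ j ∧ ns I σ j = t)).card := by
    rw [Finset.card_filter]
    apply Finset.sum_congr rfl
    intro j _
    rfl
  rw [hL]
  apply Finset.card_le_card_of_injOn (fun j => (σ j).1)
  · intro j hj
    simp only [Finset.mem_coe, Finset.mem_filter, Finset.mem_univ, true_and] at hj ⊢
    obtain ⟨-, hE, hns⟩ := hj
    exact hns ▸ avail_ns I σ hfeas j hE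
  · intro j hj j' hj' hm
    simp only [Finset.coe_filter, Set.mem_setOf_eq, Finset.mem_univ, true_and] at hj hj'
    exact ns_inj I σ hfeas hj.2.1 hj'.2.1 hm.symm (by rw [hj.2.2, hj'.2.2])

open Classical in
lemma c4 (j : Fin I.n) :
    (∑ t ∈ I.Tset.filter (fun t => I.Admissible j t), yjsol I σ j t) ≤ 1 := by
  classical
  by_cases hE : I.Early σ j
  · have h2 : ∀ t ∈ I.Tset.filter (fun t => I.Admissible j t),
        yjsol I σ j t = if ns I σ j = t then 1 else 0 := by
      intro t _
      simp [yjsol, hE]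
    rw [Finset.sum_congr rfl h2, Finset.sum_ite_eq]
    split <;> omega
  · have h2 : ∀ t ∈ I.Tset.filter (fun t => I.Admissible j t), yjsol I σ j t = 0 := by
      intro t _
      simp [yjsol, hE]
    rw [Finset.sum_congr rfl h2]
    simp

open Classical in
lemma objEq (hfeas : I.Feasible σ) :
    (∑ j : Fin I.n, ∑ t ∈ I.Tset.filter (fun t => I.Admissible j t), I.w j * yjsol I σ j t)
      = I.weightedEarly σ := by
  classical
  have h : ∀ j : Fin I.n,
      (∑ t ∈ I.Tset.filter (fun t => I.Admissible j t), I.w j * yjsol I σ j t)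
        = if I.Early σ j then I.w j else 0 := by
    intro j
    by_cases hE : I.Early σ j
    · have h2 : ∀ t ∈ I.Tset.filter (fun t => I.Admissible j t),
          I.w j * yjsol I σ j t = if ns I σ j = t then I.w j else 0 := by
        intro t _
        simp only [yjsol, hE, true_and]
        split <;> simp
      rw [Finset.sum_congr rfl h2, Finset.sum_ite_eq, if_pos hE]
      rw [if_pos]
      exact Finset.mem_filter.mpr ⟨ns_mem_Tset I σ j hE, admissible_ns I σ hfeas j hE⟩
    · rw [if_neg hE]
      apply Finset.sum_eq_zero
      intro t _
      simp [yjsol, hE]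
  rw [Finset.sum_congr rfl (fun j _ => h j)]
  rw [weightedEarly, Finset.sum_filter]

end SchedInstance

/-- if the scheduling instance admits a feasible schedule with weighted
number of early jobs `W`, then the MILP constraint system has a nonnegative integer
solution with objective value `W`. -/
theorem statement13 (I : SchedInstance) (W : ℕ)
    (h : ∃ σ : Fin I.n → Fin I.m × ℕ, I.Feasible σ ∧ I.weightedEarly σ = W) :
    ∃ (ys : Finset ℕ → ℕ) (yt : ℕ → ℕ) (yj : Fin I.n → ℕ → ℕ),
      I.MILPConstraints ys yt yj ∧ I.MILPObjective yj = W := by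
  classical
  obtain ⟨σ, hfeas, hW⟩ := h
  exact ⟨SchedInstance.ysol I σ, SchedInstance.ytsol I σ, SchedInstance.yjsol I σ,
    ⟨SchedInstance.c1 I σ, fun t _ => rfl, fun t _ => SchedInstance.c3 I σ hfeas t,
      SchedInstance.c4 I σ⟩,
    (SchedInstance.objEq I σ hfeas).trans hW⟩
end

section
/- Let I be an instance of P|r_j, p_j = p|Σ w_j U_j. If there exists an assignment of nonnegative integers y_{T'} (for every type T' ⊆ R), y_t (for every t ∈ T), and y_{j,t} (for every admissible pair (j,t)) satisfying constraints (1)–(4) and whose objective value Σ_{j,t} w_j·y_{j,t} equals W, then I admits a feasible schedule whose weighted number of early jobs is at least W. -/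
lemma abs_helper {a b c : ℕ} (h : a + c ≤ b ∨ b + c ≤ a) : (c:ℤ) ≤ |(a:ℤ) - b| := by
  rcases abs_cases ((a:ℤ) - b) with ⟨he,_⟩|⟨he,_⟩ <;> rw [he] <;> omega

lemma avail_sep (I : SchedInstance) {t1 t2 : ℕ} {T' : Finset ℕ}
    (h1 : I.AvailableOn t1 T') (h2 : I.AvailableOn t2 T') (hlt : t1 < t2) :
    t1 + I.p ≤ t2 := by
  obtain ⟨r1, hr1, ⟨ℓ1, -, ht1⟩, hmax1⟩ := h1
  obtain ⟨r2, hr2, ⟨ℓ2, -, ht2⟩, hmax2⟩ := h2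
  rcases lt_trichotomy r1 r2 with h|h|h
  · have := hmax1 r2 hr2 h
    omega
  · subst h
    have hl : ℓ1 < ℓ2 := by
      by_contra hc
      push_neg at hc
      have := Nat.mul_le_mul_left I.p hc
      omega
    have := Nat.mul_le_mul_left I.p (show ℓ1 + 1 ≤ ℓ2 by omega)
    rw [Nat.mul_add, Nat.mul_one] at this
    have := I.hp
    omega
  · have := hmax2 r1 hr1 h
    omega


open Finset in
/-- if the MILP constraint system has a nonnegative integer solution with
objective value `W`, then the scheduling instance admits a feasible schedule whose weighted
number of early jobs is at least `W`. -/
theorem statement14 (I : SchedInstance) (W : ℕ)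
    (h : ∃ (ys : Finset ℕ → ℕ) (yt : ℕ → ℕ) (yj : Fin I.n → ℕ → ℕ),
      I.MILPConstraints ys yt yj ∧ I.MILPObjective yj = W) :
    ∃ σ : Fin I.n → Fin I.m × ℕ, I.Feasible σ ∧ W ≤ I.weightedEarly σ := by
  classical
  obtain ⟨ys, yt, yj, hcon, hW⟩ := h
  obtain ⟨h1, h2, h3, h4⟩ := hcon
  set P := I.Rset.powerset with hPdef
  -- build machine types via embedding of a sigma type
  have hcard : Fintype.card (Σ a : {T' // T' ∈ P}, Fin (ys a.1)) = ∑ T' ∈ P, ys T' := by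
    rw [Fintype.card_sigma]
    simp only [Fintype.card_fin]
    exact Finset.sum_coe_sort P ys
  have hle : Fintype.card (Σ a : {T' // T' ∈ P}, Fin (ys a.1)) ≤ Fintype.card (Fin I.m) := by
    rw [hcard, Fintype.card_fin]; exact h1
  obtain ⟨e⟩ := Function.Embedding.nonempty_of_card_le hle
  set typ : Fin I.m → Finset ℕ := fun i =>
    if h : ∃ x : (Σ a : {T' // T' ∈ P}, Fin (ys a.1)), e x = i
    then (Classical.choose h).1.1 else ∅ with htypdef
  have htyp : ∀ x : (Σ a : {T' // T' ∈ P}, Fin (ys a.1)), typ (e x) = x.1.1 := by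
    intro x
    have hex : ∃ x' : (Σ a : {T' // T' ∈ P}, Fin (ys a.1)), e x' = e x := ⟨x, rfl⟩
    have hspec := Classical.choose_spec hex
    have hxx : Classical.choose hex = x := e.injective hspec
    simp only [htypdef, dif_pos hex, hxx]
  set M : ℕ → Finset (Fin I.m) := fun t => univ.filter (fun i => I.AvailableOn t (typ i))
    with hMdef
  have hMcard : ∀ t ∈ I.Tset, yt t ≤ (M t).card := by
    intro t ht
    set A : Finset (Σ a : {T' // T' ∈ P}, Fin (ys a.1)) :=
      (univ.filter (fun a : {T' // T' ∈ P} => I.AvailableOn t a.1)).sigma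
        (fun _ => univ) with hA
    have hAcard : A.card = yt t := by
      rw [hA, Finset.card_sigma]
      simp only [card_univ, Fintype.card_fin]
      rw [h2 t ht]
      calc ∑ a ∈ univ.filter (fun a : {T' // T' ∈ P} => I.AvailableOn t a.1), ys a.1
          = ∑ a : {T' // T' ∈ P}, if I.AvailableOn t a.1 then ys a.1 else 0 := by
            rw [Finset.sum_filter]
        _ = ∑ T' ∈ P, if I.AvailableOn t T' then ys T' else 0 := by
            rw [Finset.sum_subtype P (fun _ => Iff.rfl)
              (fun T' => if I.AvailableOn t T' then ys T' else 0)]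
        _ = ∑ T' ∈ P.filter (fun T' => I.AvailableOn t T'), ys T' :=
            (Finset.sum_filter _ _).symm
    have himg : A.image e ⊆ M t := by
      intro i hi
      simp only [mem_image] at hi
      obtain ⟨x, hx, rfl⟩ := hi
      simp only [hMdef, mem_filter, mem_univ, true_and]
      rw [htyp]
      rw [hA, Finset.mem_sigma] at hx
      exact (mem_filter.mp hx.1).2
    calc yt t = A.card := hAcard.symm
      _ = (A.image e).card := (Finset.card_image_of_injective A e.injective).symm
      _ ≤ (M t).card := card_le_card himg
  set J : ℕ → Finset (Fin I.n) :=
    fun t => univ.filter (fun j => I.Admissible j t ∧ 1 ≤ yj j t) with hJdef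
  have hJcard : ∀ t ∈ I.Tset, (J t).card ≤ (M t).card := by
    intro t ht
    have h5 : (J t).card ≤ ∑ j ∈ univ.filter (fun j => I.Admissible j t), yj j t := by
      calc (J t).card = ∑ _j ∈ J t, 1 := by simp
        _ ≤ ∑ j ∈ J t, yj j t := Finset.sum_le_sum (fun j hj => (mem_filter.mp hj).2.2)
        _ ≤ ∑ j ∈ univ.filter (fun j => I.Admissible j t), yj j t :=
            Finset.sum_le_sum_of_subset
              (Finset.monotone_filter_right _ (fun j _ hj => hj.1))
    exact h5.trans ((h3 t ht).trans (hMcard t ht))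
  have hinj : ∀ t ∈ I.Tset, ∃ f : Fin I.n → Fin I.m,
      (∀ j ∈ J t, f j ∈ M t) ∧ Set.InjOn f (J t) := by
    intro t ht
    have hne : Nonempty (Fin I.m) := ⟨⟨0, I.hm⟩⟩
    have henc : ((J t : Set (Fin I.n))).encard ≤ ((M t : Set (Fin I.m))).encard := by
      rw [Set.encard_coe_eq_coe_finsetCard, Set.encard_coe_eq_coe_finsetCard]
      exact_mod_cast hJcard t ht
    obtain ⟨f, hf1, hf2⟩ := Set.Finite.exists_injOn_of_encard_le (Set.toFinite _) henc
    exact ⟨f, fun j hj => hf1 (Finset.mem_coe.mpr hj), hf2⟩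
  set f : ℕ → Fin I.n → Fin I.m := fun t =>
    if ht : t ∈ I.Tset then Classical.choose (hinj t ht) else fun _ => ⟨0, I.hm⟩ with hfdef
  have hf : ∀ t (ht : t ∈ I.Tset),
      (∀ j ∈ J t, f t j ∈ M t) ∧ Set.InjOn (f t) (J t) := by
    intro t ht
    simp only [hfdef, dif_pos ht]
    exact Classical.choose_spec (hinj t ht)
  set C : Fin I.n → Finset ℕ :=
    fun j => I.Tset.filter (fun t => I.Admissible j t ∧ 1 ≤ yj j t) with hCdef
  set tmin : Fin I.n → ℕ := fun j =>
    if h : (C j).Nonempty then (C j).min' h else 0 with htmindef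
  have htmin : ∀ j, (C j).Nonempty → tmin j ∈ C j := by
    intro j hj
    simp only [htmindef, dif_pos hj]
    exact (C j).min'_mem hj
  set supT := I.Tset.sup id with hsupT
  set supR := Finset.univ.sup I.r with hsupR
  set σ : Fin I.n → Fin I.m × ℕ := fun j =>
    if (C j).Nonempty then (f (tmin j) j, tmin j)
    else (⟨0, I.hm⟩, supT + supR + I.p + j.val * I.p) with hσdef
  -- facts about scheduled jobs
  have hsch : ∀ j, (C j).Nonempty →
      tmin j ∈ I.Tset ∧ I.Admissible j (tmin j) ∧ j ∈ J (tmin j) := by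
    intro j hj
    have hm := htmin j hj
    rw [hCdef, mem_filter] at hm
    refine ⟨hm.1, hm.2.1, ?_⟩
    rw [hJdef]
    simp only [mem_filter, mem_univ, true_and]
    exact hm.2
  have hσpos : ∀ j, (C j).Nonempty → σ j = (f (tmin j) j, tmin j) := by
    intro j hj; simp only [hσdef, if_pos hj]
  have hσneg : ∀ j, ¬ (C j).Nonempty →
      σ j = (⟨0, I.hm⟩, supT + supR + I.p + j.val * I.p) := by
    intro j hj; simp only [hσdef, if_neg hj]
  have hTle : ∀ t ∈ I.Tset, t ≤ supT := fun t ht => Finset.le_sup (f := id) ht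
  refine ⟨σ, ⟨?_, ?_⟩, ?_⟩
  · -- release dates
    intro j
    by_cases hj : (C j).Nonempty
    · rw [hσpos j hj]
      exact (hsch j hj).2.1.2.1
    · rw [hσneg j hj]
      have : I.r j ≤ supR := Finset.le_sup (f := I.r) (mem_univ j)
      simp only []
      omega
  · -- separation
    intro j j' hne hmach
    by_cases hj : (C j).Nonempty <;> by_cases hj' : (C j').Nonempty
    · -- both scheduled
      rw [hσpos j hj] at hmach ⊢
      rw [hσpos j' hj'] at hmach ⊢
      simp only at hmach ⊢
      by_cases hteq : tmin j = tmin j'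
      · exfalso
        have hJ1 : j ∈ J (tmin j) := (hsch j hj).2.2
        have hJ2 : j' ∈ J (tmin j) := hteq ▸ (hsch j' hj').2.2
        have := (hf (tmin j) (hsch j hj).1).2
          (Finset.mem_coe.mpr hJ1) (Finset.mem_coe.mpr hJ2)
          (by rw [hmach, hteq])
        exact hne this
      · apply abs_helper
        have hA1 : I.AvailableOn (tmin j) (typ (f (tmin j) j)) := by
          have := (hf (tmin j) (hsch j hj).1).1 j (hsch j hj).2.2
          rw [hMdef] at this
          exact (mem_filter.mp this).2
        have hA2 : I.AvailableOn (tmin j') (typ (f (tmin j) j)) := by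
          have := (hf (tmin j') (hsch j' hj').1).1 j' (hsch j' hj').2.2
          rw [hMdef] at this
          rw [hmach]
          exact (mem_filter.mp this).2
        rcases lt_or_gt_of_ne hteq with hlt | hlt
        · exact Or.inl (avail_sep I hA1 hA2 hlt)
        · exact Or.inr (avail_sep I hA2 hA1 hlt)
    · rw [hσpos j hj, hσneg j' hj']
      simp only
      apply abs_helper
      left
      have := hTle (tmin j) (hsch j hj).1
      omega
    · rw [hσneg j hj, hσpos j' hj']
      simp only
      apply abs_helper
      right
      have := hTle (tmin j') (hsch j' hj').1
      omega
    · rw [hσneg j hj, hσneg j' hj']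
      simp only
      apply abs_helper
      have hvne : j.val ≠ j'.val := fun hv => hne (Fin.ext hv)
      rcases lt_or_gt_of_ne hvne with hlt | hlt
      · left
        have := Nat.mul_le_mul_right I.p (show j.val + 1 ≤ j'.val by omega)
        rw [Nat.add_mul, Nat.one_mul] at this
        omega
      · right
        have := Nat.mul_le_mul_right I.p (show j'.val + 1 ≤ j.val by omega)
        rw [Nat.add_mul, Nat.one_mul] at this
        omega
  · -- objective
    have hWle : W ≤ ∑ j ∈ univ.filter (fun j => (C j).Nonempty), I.w j := by
      rw [← hW]
      unfold SchedInstance.MILPObjective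
      have hzero : ∀ j ∈ (univ : Finset (Fin I.n)),
          (∑ t ∈ I.Tset.filter (fun t => I.Admissible j t), I.w j * yj j t) ≠ 0 →
          (C j).Nonempty := by
        intro j _ hne0
        obtain ⟨t, ht, htne⟩ := Finset.exists_ne_zero_of_sum_ne_zero hne0
        rw [mem_filter] at ht
        refine ⟨t, ?_⟩
        rw [hCdef, mem_filter]
        exact ⟨ht.1, ht.2, Nat.one_le_iff_ne_zero.mpr fun h0 => htne (by rw [h0, Nat.mul_zero])⟩
      rw [← Finset.sum_filter_of_ne hzero]
      apply Finset.sum_le_sum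
      intro j _
      calc ∑ t ∈ I.Tset.filter (fun t => I.Admissible j t), I.w j * yj j t
          = I.w j * ∑ t ∈ I.Tset.filter (fun t => I.Admissible j t), yj j t := by
            rw [Finset.mul_sum]
        _ ≤ I.w j * 1 := Nat.mul_le_mul_left _ (h4 j)
        _ = I.w j := Nat.mul_one _
    refine hWle.trans ?_
    unfold SchedInstance.weightedEarly
    apply Finset.sum_le_sum_of_subset
    intro j hj
    rw [mem_filter] at hj ⊢
    refine ⟨mem_univ j, ?_⟩
    unfold SchedInstance.Early
    rw [hσpos j hj.2]
    exact (hsch j hj.2).2.1.2.2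
end
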